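/- arXiv:2402.15676 — 11 statements merged into one kernel-verified Lean document; each statement's English description precedes it below -/
import Mathlib

section
/- If T = A ⊕ B where σ(A²) ∩ σ(B²) = ∅, then T is a commutator of two square-zero operators if and only if both A and B are commutators of two square-zero operators (on their respective spaces). -/
set_option maxHeartbeats 1000000
set_option synthInstance.maxHeartbeats 400000
set_option linter.unusedSectionVars false

open ContinuousLinearMap

section CommutingSpectrum

variable {𝔸 : Type*} [NormedRing 𝔸] [NormedAlgebra ℂ 𝔸] [CompleteSpace 𝔸]

lemma isClosed_centralizer' (s : Set 𝔸) : IsClosed (Set.centralizer s) := by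
  have : Set.centralizer s = ⋂ m ∈ s, {c | m * c = c * m} := by
    ext c; simp [Set.mem_centralizer_iff, Set.mem_iInter]
  rw [this]
  exact isClosed_biInter fun m _ =>
    isClosed_eq (continuous_const.mul continuous_id) (continuous_id.mul continuous_const)

/-- If `a` and `b` commute and have disjoint spectra, then `a - b` is a unit. -/
lemma isUnit_sub_of_commute_of_disjoint (a b : 𝔸) (hab : Commute a b)
    (hd : spectrum ℂ a ∩ spectrum ℂ b = ∅) : IsUnit (a - b) := by
  by_contra hu
  have hnt : Nontrivial 𝔸 := by
    by_contra hnt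
    rw [not_nontrivial_iff_subsingleton] at hnt
    exact hu ⟨⟨a - b, a - b, Subsingleton.elim _ _, Subsingleton.elim _ _⟩, rfl⟩
  -- the double centralizer of {a, b}: a commutative closed subalgebra containing a and b
  set C : Set 𝔸 := Set.centralizer {a, b} with hC
  set S : Subalgebra ℂ 𝔸 := Subalgebra.centralizer ℂ C with hS
  have hmemC : ∀ x, x ∈ ({a, b} : Set 𝔸) → x ∈ C := by
    intro x hx
    rw [hC, Set.mem_centralizer_iff]
    rintro m hm
    rcases hx with rfl | rfl <;> rcases hm with rfl | rfl
    · rfl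
    · exact hab.symm
    · exact hab
    · rfl
  have ha : a ∈ S := by
    rw [hS, Subalgebra.mem_centralizer_iff]
    intro c hc
    exact (hc a (by simp)).symm
  have hb : b ∈ S := by
    rw [hS, Subalgebra.mem_centralizer_iff]
    intro c hc
    exact (hc b (by simp)).symm
  -- S is inverse-closed
  have hinv : ∀ x : S, IsUnit (x : 𝔸) → IsUnit x := by
    rintro ⟨x, hx⟩ hux
    obtain ⟨u, hu⟩ := hux
    have hu' : (↑u : 𝔸) = x := hu
    have h2 : x * ↑u⁻¹ = 1 := by rw [← hu']; exact u.mul_inv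
    have h3 : (↑u⁻¹ : 𝔸) * x = 1 := by rw [← hu']; exact u.inv_mul
    have hxmem := (Subalgebra.mem_centralizer_iff ℂ).mp hx
    have hmem : (↑u⁻¹ : 𝔸) ∈ S := by
      rw [hS, Subalgebra.mem_centralizer_iff]
      intro c hc
      have h1 : c * x = x * c := hxmem c hc
      calc c * ↑u⁻¹ = ↑u⁻¹ * x * c * ↑u⁻¹ := by rw [h3, one_mul]
        _ = ↑u⁻¹ * (x * c) * ↑u⁻¹ := by rw [mul_assoc (↑u⁻¹ : 𝔸) x c]
        _ = ↑u⁻¹ * (c * x) * ↑u⁻¹ := by rw [h1]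
        _ = ↑u⁻¹ * c := by rw [mul_assoc, mul_assoc, h2, mul_one]
    exact ⟨⟨⟨x, hx⟩, ⟨↑u⁻¹, hmem⟩, Subtype.ext h2, Subtype.ext h3⟩, rfl⟩
  -- S is commutative
  have hScomm : ∀ x y : S, x * y = y * x := by
    rintro ⟨x, hx⟩ ⟨y, hy⟩
    have hyC : y ∈ C := by
      rw [hC, Set.mem_centralizer_iff]
      intro m hm
      exact (Subalgebra.mem_centralizer_iff ℂ).mp hy m (hmemC m hm)
    exact Subtype.ext ((Subalgebra.mem_centralizer_iff ℂ).mp hx y hyC).symm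
  letI : NormedCommRing S := { (inferInstance : NormedRing S) with mul_comm := hScomm }
  haveI : CompleteSpace S := by
    have hclosed : IsClosed (S : Set 𝔸) := by
      rw [hS, Subalgebra.coe_centralizer]
      exact isClosed_centralizer' C
    exact hclosed.completeSpace_coe
  -- a - b is not a unit in S either
  have hu' : ¬IsUnit ((⟨a, ha⟩ - ⟨b, hb⟩ : S)) := by
    intro h
    exact hu (by simpa using h.map S.val)
  obtain ⟨φ, hφ⟩ := WeakDual.CharacterSpace.exists_apply_eq_zero hu'
  rw [map_sub, sub_eq_zero] at hφ
  -- spectrum in S is contained in spectrum in 𝔸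
  have hspec : ∀ x : S, spectrum ℂ x ⊆ spectrum ℂ (x : 𝔸) := by
    intro x z hz
    rw [spectrum.mem_iff] at hz ⊢
    intro hcontra
    exact hz (hinv _ (by simpa using hcontra))
  have h1 : φ (⟨a, ha⟩ : S) ∈ spectrum ℂ a := hspec _ (AlgHom.apply_mem_spectrum φ _)
  have h2 : φ (⟨b, hb⟩ : S) ∈ spectrum ℂ b := hspec _ (AlgHom.apply_mem_spectrum φ _)
  rw [← hφ] at h2
  exact Set.eq_empty_iff_forall_notMem.mp hd _ ⟨h1, h2⟩

end CommutingSpectrum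

open ContinuousLinearMap

section Rosenblum

variable {E F : Type*} [NormedAddCommGroup E] [NormedSpace ℂ E] [CompleteSpace E]
  [NormedAddCommGroup F] [NormedSpace ℂ F] [CompleteSpace F]

/-- Rosenblum: if `σ(A) ∩ σ(B) = ∅` and `A X = X B`, then `X = 0`. -/
lemma rosenblum_eq_zero (A : E →L[ℂ] E) (B : F →L[ℂ] F)
    (hd : spectrum ℂ A ∩ spectrum ℂ B = ∅)
    (X : F →L[ℂ] E) (hX : A.comp X = X.comp B) : X = 0 := by
  -- left and right multiplication operators on W = F →L[ℂ] E
  set LA : (F →L[ℂ] E) →L[ℂ] (F →L[ℂ] E) := ContinuousLinearMap.compL ℂ F E E A with hLA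
  set RB : (F →L[ℂ] E) →L[ℂ] (F →L[ℂ] E) := (ContinuousLinearMap.compL ℂ F F E).flip B with hRB
  have hLAapp : ∀ Y : F →L[ℂ] E, LA Y = A.comp Y := fun _ => rfl
  have hRBapp : ∀ Y : F →L[ℂ] E, RB Y = Y.comp B := fun _ => rfl
  -- spectrum of left multiplication
  set Lof : (E →L[ℂ] E) → ((F →L[ℂ] E) →L[ℂ] (F →L[ℂ] E)) :=
    fun C => ContinuousLinearMap.compL ℂ F E E C with hLof
  have hLof_apply : ∀ (C : E →L[ℂ] E) (Y : F →L[ℂ] E), Lof C Y = C.comp Y := fun _ _ => rfl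
  have hLof_mul : ∀ C D : E →L[ℂ] E, Lof C * Lof D = Lof (C * D) := by
    intro C D
    ext Y y
    simp [hLof_apply, ContinuousLinearMap.mul_apply]
  have hLof_one : Lof 1 = 1 := by
    ext Y y
    simp [hLof_apply]
  have hLspec : spectrum ℂ LA ⊆ spectrum ℂ A := by
    intro z hz
    by_contra hzA
    rw [spectrum.notMem_iff] at hzA
    obtain ⟨u, hu⟩ := hzA
    apply spectrum.mem_iff.mp hz
    have key : algebraMap ℂ ((F →L[ℂ] E) →L[ℂ] (F →L[ℂ] E)) z - LA
        = Lof (algebraMap ℂ (E →L[ℂ] E) z - A) := by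
      ext Y y
      simp [hLof_apply, hLAapp, Algebra.algebraMap_eq_smul_one, ContinuousLinearMap.sub_apply,
        ContinuousLinearMap.smul_apply]
    refine ⟨⟨_, Lof ↑u⁻¹, ?_, ?_⟩, rfl⟩
    · rw [key, ← hu, hLof_mul, u.mul_inv, hLof_one]
    · rw [key, ← hu, hLof_mul, u.inv_mul, hLof_one]
  -- spectrum of right multiplication
  set Rof : (F →L[ℂ] F) → ((F →L[ℂ] E) →L[ℂ] (F →L[ℂ] E)) :=
    fun C => (ContinuousLinearMap.compL ℂ F F E).flip C with hRof
  have hRof_apply : ∀ (C : F →L[ℂ] F) (Y : F →L[ℂ] E), Rof C Y = Y.comp C := fun _ _ => rfl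
  have hRof_mul : ∀ C D : F →L[ℂ] F, Rof C * Rof D = Rof (D * C) := by
    intro C D
    ext Y y
    simp [hRof_apply, ContinuousLinearMap.mul_apply]
  have hRof_one : Rof 1 = 1 := by
    ext Y y
    simp [hRof_apply]
  have hRspec : spectrum ℂ RB ⊆ spectrum ℂ B := by
    intro z hz
    by_contra hzB
    rw [spectrum.notMem_iff] at hzB
    obtain ⟨u, hu⟩ := hzB
    apply spectrum.mem_iff.mp hz
    have key : algebraMap ℂ ((F →L[ℂ] E) →L[ℂ] (F →L[ℂ] E)) z - RB
        = Rof (algebraMap ℂ (F →L[ℂ] F) z - B) := by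
      ext Y y
      simp [hRof_apply, hRBapp, Algebra.algebraMap_eq_smul_one, ContinuousLinearMap.sub_apply,
        ContinuousLinearMap.smul_apply]
    refine ⟨⟨_, Rof ↑u⁻¹, ?_, ?_⟩, rfl⟩
    · rw [key, ← hu, hRof_mul, u.inv_mul, hRof_one]
    · rw [key, ← hu, hRof_mul, u.mul_inv, hRof_one]
  have hcomm : Commute LA RB := by
    ext Y y
    simp [ContinuousLinearMap.mul_apply, hLAapp, hRBapp]
  have hdisj' : spectrum ℂ LA ∩ spectrum ℂ RB = ∅ := by
    rw [Set.eq_empty_iff_forall_notMem]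
    intro z hz
    exact Set.eq_empty_iff_forall_notMem.mp hd z ⟨hLspec hz.1, hRspec hz.2⟩
  clear_value LA RB Lof Rof
  have hunit : IsUnit (LA - RB) := isUnit_sub_of_commute_of_disjoint LA RB hcomm hdisj'
  obtain ⟨u, hu⟩ := hunit
  have h0 : (LA - RB) X = 0 := by
    rw [ContinuousLinearMap.sub_apply, hLAapp, hRBapp, hX, sub_self]
  have hfin : X = (↑u⁻¹ : (F →L[ℂ] E) →L[ℂ] (F →L[ℂ] E)) ((LA - RB) X) := by
    rw [← hu, ← ContinuousLinearMap.mul_apply, u.inv_mul, ContinuousLinearMap.one_apply]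
  rw [h0, map_zero] at hfin
  exact hfin

end Rosenblum

open ContinuousLinearMap

private lemma aux_anticomm {R : Type*} [Ring R] (M N : R) (hM : M * M = 0) :
    (M * N - N * M) * M + M * (M * N - N * M) = 0 := by
  rw [sub_mul, mul_sub, mul_assoc N M M, hM, mul_zero, ← mul_assoc M M N, hM, zero_mul,
    sub_zero, zero_sub, mul_assoc M N M]
  exact add_neg_cancel _

private lemma aux_sq_comm {R : Type*} [Ring R] (M N T : R) (hM : M * M = 0)
    (hT : T = M * N - N * M) : (T * T) * M = M * (T * T) := by
  have h1 : T * M + M * T = 0 := by rw [hT]; exact aux_anticomm M N hM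
  have h2 : T * M = -(M * T) := eq_neg_of_add_eq_zero_left h1
  calc (T * T) * M = T * (T * M) := mul_assoc _ _ _
    _ = -(T * (M * T)) := by rw [h2, mul_neg]
    _ = -((T * M) * T) := by rw [mul_assoc]
    _ = M * T * T := by rw [h2, neg_mul, neg_neg]
    _ = M * (T * T) := mul_assoc _ _ _

private lemma aux_sq_comm2 {R : Type*} [Ring R] (M N T : R) (hN : N * N = 0)
    (hT : T = M * N - N * M) : (T * T) * N = N * (T * T) := by
  have h := aux_sq_comm N M (-T) hN (by rw [hT, neg_sub])
  rwa [neg_mul_neg] at h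

section ProdHelpers

variable {G1 G2 : Type*} [NormedAddCommGroup G1] [NormedSpace ℂ G1]
  [NormedAddCommGroup G2] [NormedSpace ℂ G2]

private lemma prodMap_mul' (f f' : G1 →L[ℂ] G1) (g g' : G2 →L[ℂ] G2) :
    (f.prodMap g) * (f'.prodMap g') = (f * f').prodMap (g * g') := by
  refine ContinuousLinearMap.ext fun p => ?_
  rfl

private lemma prodMap_sub' (f f' : G1 →L[ℂ] G1) (g g' : G2 →L[ℂ] G2) :
    f.prodMap g - f'.prodMap g' = (f - f').prodMap (g - g') := by
  refine ContinuousLinearMap.ext fun p => ?_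
  simp [coe_prodMap', Prod.ext_iff]

private lemma prodMap_zero' : (0 : G1 →L[ℂ] G1).prodMap (0 : G2 →L[ℂ] G2) = 0 := by
  refine ContinuousLinearMap.ext fun p => ?_
  simp [coe_prodMap', Prod.ext_iff]

private lemma prodMap_inj {f f' : G1 →L[ℂ] G1} {g g' : G2 →L[ℂ] G2}
    (h : f.prodMap g = f'.prodMap g') : f = f' ∧ g = g' := by
  constructor
  · refine ContinuousLinearMap.ext fun x => ?_
    have := congrArg Prod.fst (DFunLike.congr_fun h (x, 0))
    simpa [coe_prodMap'] using this
  · refine ContinuousLinearMap.ext fun y => ?_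
    have := congrArg Prod.snd (DFunLike.congr_fun h (0, y))
    simpa [coe_prodMap'] using this

variable [CompleteSpace G1] [CompleteSpace G2]

/-- An operator commuting with `P ⊕ Q`, where `σ(P) ∩ σ(Q) = ∅`, is block diagonal. -/
private lemma block_diag (P : G1 →L[ℂ] G1) (Q : G2 →L[ℂ] G2)
    (hd : spectrum ℂ P ∩ spectrum ℂ Q = ∅) (M : (G1 × G2) →L[ℂ] (G1 × G2))
    (hc : (P.prodMap Q) * M = M * (P.prodMap Q)) :
    M = ((fst ℂ G1 G2).comp (M.comp (inl ℂ G1 G2))).prodMap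
        ((snd ℂ G1 G2).comp (M.comp (inr ℂ G1 G2))) := by
  have h12 : P.comp ((fst ℂ G1 G2).comp (M.comp (inr ℂ G1 G2)))
      = ((fst ℂ G1 G2).comp (M.comp (inr ℂ G1 G2))).comp Q := by
    refine ContinuousLinearMap.ext fun y => ?_
    have h := congrArg Prod.fst (DFunLike.congr_fun hc ((0 : G1), y))
    simpa [ContinuousLinearMap.mul_apply, coe_prodMap'] using h
  have h21 : Q.comp ((snd ℂ G1 G2).comp (M.comp (inl ℂ G1 G2)))
      = ((snd ℂ G1 G2).comp (M.comp (inl ℂ G1 G2))).comp P := by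
    refine ContinuousLinearMap.ext fun x => ?_
    have h := congrArg Prod.snd (DFunLike.congr_fun hc (x, (0 : G2)))
    simpa [ContinuousLinearMap.mul_apply, coe_prodMap'] using h
  have hX12 : (fst ℂ G1 G2).comp (M.comp (inr ℂ G1 G2)) = 0 :=
    rosenblum_eq_zero P Q hd _ h12
  have hX21 : (snd ℂ G1 G2).comp (M.comp (inl ℂ G1 G2)) = 0 :=
    rosenblum_eq_zero Q P (by rw [Set.inter_comm]; exact hd) _ h21
  refine ContinuousLinearMap.ext fun p => ?_
  have hdecomp : M p = M (p.1, 0) + M (0, p.2) := by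
    rw [← map_add]
    congr 1
    simp [Prod.ext_iff]
  have h1 := DFunLike.congr_fun hX12 p.2
  have h2 := DFunLike.congr_fun hX21 p.1
  simp only [ContinuousLinearMap.comp_apply, inr_apply, inl_apply, coe_fst', coe_snd',
    ContinuousLinearMap.zero_apply] at h1 h2
  rw [hdecomp]
  refine Prod.ext ?_ ?_
  · simp [coe_prodMap', h1]
  · simp [coe_prodMap', h2]

end ProdHelpers

/-- If `T = A ⊕ B` with `σ(A²) ∩ σ(B²) = ∅`, then `T` is a commutator of two
square-zero operators iff both `A` and `B` are. -/
theorem stmt_2 {HA HB : Type*}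
    [NormedAddCommGroup HA] [InnerProductSpace ℂ HA] [CompleteSpace HA]
    [NormedAddCommGroup HB] [InnerProductSpace ℂ HB] [CompleteSpace HB]
    (A : HA →L[ℂ] HA) (B : HB →L[ℂ] HB)
    (hdisj : spectrum ℂ (A * A) ∩ spectrum ℂ (B * B) = ∅) :
    (∃ M N : (HA × HB) →L[ℂ] (HA × HB), M * M = 0 ∧ N * N = 0 ∧
        A.prodMap B = M * N - N * M) ↔
      ((∃ M N : HA →L[ℂ] HA, M * M = 0 ∧ N * N = 0 ∧ A = M * N - N * M) ∧
       (∃ M N : HB →L[ℂ] HB, M * M = 0 ∧ N * N = 0 ∧ B = M * N - N * M)) := by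
  constructor
  · rintro ⟨M, N, hM, hN, hT⟩
    have hTT : (A.prodMap B) * (A.prodMap B) = (A * A).prodMap (B * B) := prodMap_mul' A A B B
    have hMcomm : ((A * A).prodMap (B * B)) * M = M * ((A * A).prodMap (B * B)) := by
      rw [← hTT]
      exact aux_sq_comm M N _ hM hT
    have hNcomm : ((A * A).prodMap (B * B)) * N = N * ((A * A).prodMap (B * B)) := by
      rw [← hTT]
      exact aux_sq_comm2 M N _ hN hT
    obtain hMsplit := block_diag (A * A) (B * B) hdisj M hMcomm
    obtain hNsplit := block_diag (A * A) (B * B) hdisj N hNcomm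
    set MA := (fst ℂ HA HB).comp (M.comp (inl ℂ HA HB))
    set MB := (snd ℂ HA HB).comp (M.comp (inr ℂ HA HB))
    set NA := (fst ℂ HA HB).comp (N.comp (inl ℂ HA HB))
    set NB := (snd ℂ HA HB).comp (N.comp (inr ℂ HA HB))
    have hMM : (MA * MA).prodMap (MB * MB) = (0 : HA →L[ℂ] HA).prodMap (0 : HB →L[ℂ] HB) := by
      rw [← prodMap_mul', ← hMsplit, hM, prodMap_zero']
    have hNN : (NA * NA).prodMap (NB * NB) = (0 : HA →L[ℂ] HA).prodMap (0 : HB →L[ℂ] HB) := by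
      rw [← prodMap_mul', ← hNsplit, hN, prodMap_zero']
    have hABsplit : A.prodMap B = (MA * NA - NA * MA).prodMap (MB * NB - NB * MB) := by
      rw [hT, hMsplit, hNsplit, prodMap_mul', prodMap_mul', prodMap_sub']
    obtain ⟨hA, hB⟩ := prodMap_inj hABsplit
    obtain ⟨hMA, hMB⟩ := prodMap_inj hMM
    obtain ⟨hNA, hNB⟩ := prodMap_inj hNN
    exact ⟨⟨MA, NA, hMA, hNA, hA⟩, ⟨MB, NB, hMB, hNB, hB⟩⟩
  · rintro ⟨⟨MA, NA, hMA, hNA, hA⟩, ⟨MB, NB, hMB, hNB, hB⟩⟩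
    refine ⟨MA.prodMap MB, NA.prodMap NB, ?_, ?_, ?_⟩
    · rw [prodMap_mul', hMA, hMB, prodMap_zero']
    · rw [prodMap_mul', hNA, hNB, prodMap_zero']
    · rw [hA, hB, ← prodMap_sub', ← prodMap_mul', ← prodMap_mul']
end

section
/- An invertible operator B on a Hilbert space is a commutator of two square-zero operators if and only if B is similar to A₀ ⊕ (-A₀) for some invertible operator A₀ (acting on a subspace of half the dimension). -/
/-!
Write `B = MN - NM` with `M² = N² = 0`. Then `M` and `N` both anticommute with `B`, hence `M`
anticommutes with `B⁻¹`, so `B` and `B⁻¹` preserve `K = ker M`, and `MN B⁻¹ = 1 - N B⁻¹ M` shows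
that `N B⁻¹` is a right inverse of `M` on `K`. Therefore `(x, y) ↦ x + N B⁻¹ y` is an isomorphism
`K × K ≃ H`, and since `B N B⁻¹ = -N` it carries `B|_K ⊕ (-B|_K)` to `B`.
Conversely, `A ⊕ (-A)` is the commutator of the square-zero block operators
`[[0, 1], [0, 0]]` and `[[0, 0], [A, 0]]`, and conjugation is a ring isomorphism.
-/

section Ring

variable {R : Type*} [Ring R]

def IsSqZeroCommutator (b : R) : Prop :=
  ∃ m n : R, m * m = 0 ∧ n * n = 0 ∧ b = m * n - n * m

theorem IsSqZeroCommutator.map {S F : Type*} [Ring S] [FunLike F R S] [RingHomClass F R S]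
    (f : F) {b : R} (hb : IsSqZeroCommutator b) : IsSqZeroCommutator (f b) := by
  obtain ⟨m, n, hm, hn, rfl⟩ := hb
  exact ⟨f m, f n, by rw [← map_mul, hm, map_zero], by rw [← map_mul, hn, map_zero],
    by rw [map_sub, map_mul, map_mul]⟩

theorem mul_commutator_eq_neg_of_mul_self_eq_zero {m : R} (hm : m * m = 0) (n : R) :
    m * (m * n - n * m) = -((m * n - n * m) * m) := by
  rw [mul_sub, sub_mul, ← mul_assoc, hm, mul_assoc n, hm]
  simp only [zero_mul, mul_zero, zero_sub, sub_zero, mul_assoc]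

theorem mul_commutator_eq_neg_of_mul_self_eq_zero' {n : R} (hn : n * n = 0) (m : R) :
    n * (m * n - n * m) = -((m * n - n * m) * n) := by
  rw [← neg_sub, mul_neg, neg_mul, mul_commutator_eq_neg_of_mul_self_eq_zero hn]

theorem mul_inverse_eq_neg_of_mul_eq_neg {a b c : R} (h : a * b = -(b * a)) (hbc : b * c = 1)
    (hcb : c * b = 1) : a * c = -(c * a) :=
  calc a * c = c * (b * a) * c := by rw [← mul_assoc, hcb, one_mul]
    _ = -(c * a * (b * c)) := by rw [← neg_neg (b * a), ← h]; noncomm_ring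
    _ = -(c * a) := by rw [hbc, mul_one]

end Ring

namespace ContinuousLinearMap

variable {R E : Type*} [Ring R] [AddCommGroup E] [Module R E] [TopologicalSpace E]

theorem mapsTo_ker_of_mul_eq {M B B' : E →L[R] E} (h : M * B = B' * M) :
    ∀ x ∈ M.ker, B x ∈ M.ker := fun x hx => by
  have hx' : M x = 0 := hx
  simpa [hx'] using congr($h x)

theorem isUnit_restrict {K : Submodule R E} {B C : E →L[R] E} (hBC : B * C = 1) (hCB : C * B = 1)
    (hB : ∀ x ∈ K, B x ∈ K) (hC : ∀ x ∈ K, C x ∈ K) : IsUnit (B.restrict hB) :=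
  isUnit_iff_exists.2 ⟨C.restrict hC, by ext x; exact congr($hBC (x : E)),
    by ext x; exact congr($hCB (x : E))⟩

variable [IsTopologicalAddGroup E]

theorem isSqZeroCommutator_prodMap_neg (A : E →L[R] E) : IsSqZeroCommutator (A.prodMap (-A)) := by
  refine ⟨(snd R E E).prod 0, (0 : E × E →L[R] E).prod (A.comp (fst R E E)), ?_, ?_, ?_⟩ <;>
    ext <;> simp

theorem exists_equiv_ker_prod_ker {M : E →L[R] E} (hM : M * M = 0) (J : E →L[R] E)
    (hJ : ∀ y ∈ M.ker, M (J y) = y) :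
    ∃ S : E ≃L[R] M.ker × M.ker, ∀ p, S.symm p = (p.1 : E) + J p.2 := by
  have hMM (v : E) : M v ∈ M.ker := congr($hM v)
  have hproj (v : E) : (1 - J * M) v ∈ M.ker := by
    simp [LinearMap.mem_ker, hJ _ (hMM v)]
  let toProd : E →L[R] M.ker × M.ker :=
    ((1 - J * M).codRestrict M.ker hproj).prod (M.codRestrict M.ker hMM)
  let ofProd : M.ker × M.ker →L[R] E := M.ker.subtypeL.coprod (J.comp M.ker.subtypeL)
  refine ⟨.equivOfInverse toProd ofProd (fun v => ?_) (fun p => ?_), fun p => rfl⟩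
  · simp [toProd, ofProd]
  · obtain ⟨⟨x, hx⟩, ⟨y, hy⟩⟩ := p
    have hx' : M x = 0 := hx
    ext <;> simp [toProd, ofProd, hx', hJ y hy]

theorem exists_prodMap_neg_conj_eq_of_isUnit {M N : E →L[R] E} (hM : M * M = 0) (hN : N * N = 0)
    (hB : IsUnit (M * N - N * M)) :
    ∃ (K : Submodule R E) (A₀ : K →L[R] K) (S : E ≃L[R] K × K), IsUnit A₀ ∧
      (S.symm : K × K →L[R] E).comp ((A₀.prodMap (-A₀)).comp (S : E →L[R] K × K)) =
        M * N - N * M := by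
  set B := M * N - N * M with hB_def
  obtain ⟨C, hBC, hCB⟩ := isUnit_iff_exists.1 hB
  have hMB : M * B = -(B * M) := mul_commutator_eq_neg_of_mul_self_eq_zero hM N
  have hMC : M * C = -(C * M) := mul_inverse_eq_neg_of_mul_eq_neg hMB hBC hCB
  have hNB : N * B = -(B * N) := mul_commutator_eq_neg_of_mul_self_eq_zero' hN M
  have hJ : M * (N * C) = 1 - N * C * M := by
    rw [← mul_assoc, show M * N = B + N * M by rw [hB_def]; abel, add_mul, hBC, mul_assoc, hMC,
      mul_neg, ← mul_assoc, sub_eq_add_neg]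
  have hBJ : B * (N * C) = -N := by
    rw [← mul_assoc, ← neg_neg (B * N), ← hNB, neg_mul, mul_assoc, hBC, mul_one]
  obtain ⟨S, hS⟩ := exists_equiv_ker_prod_ker hM (N * C) fun y hy => by
    simpa [show M y = 0 from hy] using congr($hJ y)
  have hBK := mapsTo_ker_of_mul_eq (hMB.trans (neg_mul _ _).symm)
  refine ⟨M.ker, B.restrict hBK, S,
    isUnit_restrict hBC hCB hBK (mapsTo_ker_of_mul_eq (hMC.trans (neg_mul _ _).symm)), ?_⟩
  ext v
  obtain ⟨p, rfl⟩ := S.symm.surjective v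
  simp only [coe_comp, ContinuousLinearEquiv.coe_coe, Function.comp_apply]
  rw [S.apply_symm_apply, hS, hS]
  have hBJp : B (N (C p.2)) = -N p.2 := congr($hBJ p.2)
  have hCBp : C (B p.2) = p.2 := congr($hCB p.2)
  simp [hBJp, hCBp]

end ContinuousLinearMap

theorem stmt_3_general {H : Type*} [NormedAddCommGroup H] [InnerProductSpace ℂ H]
    (B : H →L[ℂ] H) (hB : IsUnit B) :
    (∃ M N : H →L[ℂ] H, M * M = 0 ∧ N * N = 0 ∧ B = M * N - N * M) ↔
      (∃ (K : Submodule ℂ H) (A₀ : K →L[ℂ] K) (S : H ≃L[ℂ] K × K),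
        IsUnit A₀ ∧
        ((S.symm : K × K →L[ℂ] H).comp
            ((A₀.prodMap (-A₀)).comp (S : H →L[ℂ] K × K))) = B) := by
  constructor
  · rintro ⟨M, N, hM, hN, rfl⟩
    exact ContinuousLinearMap.exists_prodMap_neg_conj_eq_of_isUnit hM hN hB
  · rintro ⟨K, A₀, S, -, rfl⟩
    exact A₀.isSqZeroCommutator_prodMap_neg.map S.symm.conjContinuousAlgEquiv

/-- An invertible operator `B` on a Hilbert space is a commutator of two square-zero
operators iff `B` is similar to `A₀ ⊕ (-A₀)` for some invertible operator `A₀`. -/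
theorem stmt_3 {H : Type*} [NormedAddCommGroup H] [InnerProductSpace ℂ H]
    [CompleteSpace H] (B : H →L[ℂ] H) (hB : IsUnit B) :
    (∃ M N : H →L[ℂ] H, M * M = 0 ∧ N * N = 0 ∧ B = M * N - N * M) ↔
      (∃ (K : Submodule ℂ H) (A₀ : K →L[ℂ] K) (S : H ≃L[ℂ] K × K),
        IsUnit A₀ ∧
        ((S.symm : K × K →L[ℂ] H).comp
            ((A₀.prodMap (-A₀)).comp (S : H →L[ℂ] K × K))) = B) :=
  stmt_3_general B hB
end

section
/- If an invertible n×n complex matrix B is a commutator of two square-zero matrices, then n is even. -/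
open Matrix

lemma rank_sub_le_aux {n : ℕ} (X Y : Matrix (Fin n) (Fin n) ℂ) :
    (X - Y).rank ≤ X.rank + Y.rank := by
  have hle : LinearMap.range (X - Y).mulVecLin ≤
      LinearMap.range X.mulVecLin ⊔ LinearMap.range Y.mulVecLin := by
    rintro v ⟨w, rfl⟩
    have : (X - Y).mulVecLin w = X.mulVecLin w - Y.mulVecLin w := by
      simp [Matrix.sub_mulVec, Matrix.mulVecLin]
    rw [this]
    exact Submodule.sub_mem _ (Submodule.mem_sup_left ⟨w, rfl⟩)
      (Submodule.mem_sup_right ⟨w, rfl⟩)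
  have h1 : (X - Y).rank ≤ Module.finrank ℂ
      (↥(LinearMap.range X.mulVecLin ⊔ LinearMap.range Y.mulVecLin)) :=
    Submodule.finrank_mono hle
  exact h1.trans (Submodule.finrank_add_le_finrank_add_finrank _ _)

/-- If an invertible `n × n` complex matrix is a commutator of two square-zero
matrices, then `n` is even. -/
theorem stmt_4 {n : ℕ} (B M N : Matrix (Fin n) (Fin n) ℂ)
    (hB : IsUnit B) (hM : M * M = 0) (hN : N * N = 0)
    (hBMN : B = M * N - N * M) :
    Even n := by
  have hrB : B.rank = n := by simpa using B.rank_of_isUnit hB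
  have h1 : B.rank ≤ M.rank + N.rank := by
    calc B.rank ≤ (M * N).rank + (N * M).rank := by
          rw [hBMN]; exact rank_sub_le_aux _ _
      _ ≤ M.rank + N.rank :=
          Nat.add_le_add (rank_mul_le_left M N) (rank_mul_le_left N M)
  have h2 : M.rank + M.rank ≤ n := by
    simpa using Matrix.rank_add_rank_le_card_of_mul_eq_zero hM
  have h3 : N.rank + N.rank ≤ n := by
    simpa using Matrix.rank_add_rank_le_card_of_mul_eq_zero hN
  exact ⟨M.rank, by omega⟩
end

section
/- If T = MN - NM with M² = 0 = N², then for every nonzero complex α and every positive integer k, the kernels of (T - αI)^k and (T + αI)^k have the same dimension. -/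
/-! The operator `S = M + N` anticommutes with `T` and satisfies `S⁴ = T²`. Anticommutation makes
`S` map `ker (T - α)^k` into `ker (T + α)^k`, and this map is injective: a vector killed by `S`
is killed by `T²`, and the generalized eigenspaces of `T` for `0` and `α ≠ 0` meet only in `0`.
Exchanging `α` and `-α` gives the reverse inequality of ranks. -/

open Module End

section SquareZero

variable {A : Type*} [Ring A] {M N : A}

theorem add_mul_commutator_of_mul_self_eq_zero (hM : M * M = 0) (hN : N * N = 0) :
    (M + N) * (M * N - N * M) = -((M * N - N * M) * (M + N)) := by
  have hM' : ∀ X, M * (M * X) = 0 := fun X => by rw [← mul_assoc, hM, zero_mul]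
  have hN' : ∀ X, N * (N * X) = 0 := fun X => by rw [← mul_assoc, hN, zero_mul]
  simp only [mul_add, add_mul, mul_sub, sub_mul, mul_assoc, hM, hN, hM', hN', mul_zero]
  abel

theorem commutator_sq_of_mul_self_eq_zero (hM : M * M = 0) (hN : N * N = 0) :
    (M * N - N * M) ^ 2 = (M + N) ^ 4 := by
  have hM' : ∀ X, M * (M * X) = 0 := fun X => by rw [← mul_assoc, hM, zero_mul]
  have hN' : ∀ X, N * (N * X) = 0 := fun X => by rw [← mul_assoc, hN, zero_mul]
  simp only [pow_succ, pow_zero, one_mul, mul_add, add_mul, mul_sub, sub_mul, mul_assoc, hM, hN,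
    hM', hN', mul_zero, zero_mul]
  abel

end SquareZero

namespace Module.End

variable {R V : Type*} [CommRing R] [AddCommGroup V] [Module R V] {S T : End R V}

theorem mapsTo_genEigenspace_neg_of_mul_eq_neg_mul (h : S * T = -(T * S)) (μ : R) (k : ℕ∞) :
    Set.MapsTo S (T.genEigenspace μ k) (T.genEigenspace (-μ) k) := by
  intro x hx
  obtain ⟨l, hl, hx⟩ := mem_genEigenspace.mp hx
  refine mem_genEigenspace.mpr ⟨l, hl, ?_⟩
  have hsemiconj : SemiconjBy S (-(T - μ • 1)) (T - (-μ) • 1) := by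
    simp only [SemiconjBy, mul_neg, mul_sub, sub_mul, h, neg_smul, neg_mul, mul_smul_comm,
      smul_mul_assoc, mul_one, one_mul]
    abel
  rw [LinearMap.mem_ker] at hx ⊢
  rw [← mul_apply, ← (hsemiconj.pow_right l).eq, neg_pow, mul_apply, mul_apply, hx, map_zero,
    map_zero]

variable [IsDomain R] [IsTorsionFree R V]

theorem rank_genEigenspace_le_neg (hST : S * T = -(T * S))
    (hker : LinearMap.ker S ≤ T.genEigenspace 0 ⊤) {μ : R} (hμ : μ ≠ 0) (k : ℕ∞) :
    Module.rank R (T.genEigenspace μ k) ≤ Module.rank R (T.genEigenspace (-μ) k) := by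
  refine LinearMap.rank_le_of_injective
    (S.restrict fun _ hx ↦ mapsTo_genEigenspace_neg_of_mul_eq_neg_mul hST μ k hx) ?_
  refine (injective_iff_map_eq_zero _).mpr fun x hx ↦ Subtype.ext ?_
  have hSx : S x = 0 := congrArg Subtype.val hx
  exact Submodule.disjoint_def.mp (T.disjoint_genEigenspace hμ k ⊤) x x.2 (hker hSx)

theorem rank_genEigenspace_neg (hST : S * T = -(T * S))
    (hker : LinearMap.ker S ≤ T.genEigenspace 0 ⊤) {μ : R} (hμ : μ ≠ 0) (k : ℕ∞) :
    Module.rank R (T.genEigenspace (-μ) k) = Module.rank R (T.genEigenspace μ k) := by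
  refine le_antisymm ?_ (rank_genEigenspace_le_neg hST hker hμ k)
  have := rank_genEigenspace_le_neg hST hker (neg_ne_zero.mpr hμ) k
  rwa [neg_neg] at this

end Module.End

theorem stmt_8_general {H : Type*} [NormedAddCommGroup H] [InnerProductSpace ℂ H]
    (M N T : H →L[ℂ] H) (hM : M * M = 0) (hN : N * N = 0)
    (hT : T = M * N - N * M) (α : ℂ) (hα : α ≠ 0) (k : ℕ) :
    Module.rank ℂ (LinearMap.ker (((T - algebraMap ℂ (H →L[ℂ] H) α) ^ k : H →L[ℂ] H) : H →ₗ[ℂ] H)) =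
      Module.rank ℂ (LinearMap.ker (((T + algebraMap ℂ (H →L[ℂ] H) α) ^ k : H →L[ℂ] H) : H →ₗ[ℂ] H)) := by
  let φ : (H →L[ℂ] H) →+* End ℂ H := ContinuousLinearMap.toLinearMapRingHom
  have hST : φ (M + N) * φ T = -(φ T * φ (M + N)) := by
    rw [← map_mul, ← map_mul, ← map_neg, hT, add_mul_commutator_of_mul_self_eq_zero hM hN]
  have hker : LinearMap.ker (φ (M + N)) ≤ (φ T).genEigenspace 0 ⊤ := by
    intro x hx
    refine (φ T).genEigenspace 0 |>.monotone le_top (mem_genEigenspace_nat (k := 2).mpr ?_)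
    rw [LinearMap.mem_ker] at hx ⊢
    rw [zero_smul, sub_zero, ← map_pow, hT, commutator_sq_of_mul_self_eq_zero hM hN,
      map_pow, pow_succ, mul_apply, hx, map_zero]
  have hcoe : ∀ μ : ℂ,
      ((T - algebraMap ℂ (H →L[ℂ] H) μ) ^ k : H →L[ℂ] H) = (φ T - μ • 1) ^ k := by
    intro μ
    change φ _ = _
    rw [map_pow, map_sub, Algebra.algebraMap_eq_smul_one]
    rfl
  have := rank_genEigenspace_neg hST hker hα k
  rw [genEigenspace_nat, genEigenspace_nat] at this
  rw [← sub_neg_eq_add, ← map_neg, hcoe, hcoe]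
  exact this.symm

/-- If `T = MN - NM` with `M² = 0 = N²`, then for every nonzero `α` and `k ≥ 1`,
`nul (T - αI)^k = nul (T + αI)^k`. -/
theorem stmt_8 {H : Type*} [NormedAddCommGroup H] [InnerProductSpace ℂ H]
    [CompleteSpace H] (M N T : H →L[ℂ] H) (hM : M * M = 0) (hN : N * N = 0)
    (hT : T = M * N - N * M) (α : ℂ) (hα : α ≠ 0) (k : ℕ) (hk : 1 ≤ k) :
    Module.rank ℂ (LinearMap.ker (((T - algebraMap ℂ (H →L[ℂ] H) α) ^ k : H →L[ℂ] H) : H →ₗ[ℂ] H)) =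
      Module.rank ℂ (LinearMap.ker (((T + algebraMap ℂ (H →L[ℂ] H) α) ^ k : H →L[ℂ] H) : H →ₗ[ℂ] H)) :=
  stmt_8_general M N T hM hN hT α hα k
end

section
/- If an n×n complex matrix T is a commutator of two square-zero matrices, then T is similar to -T. -/
/-!
Put `A = M + N`. Since `M² = N² = 0`, `A` anticommutes with `T` and `T² = A⁴`. In the Fitting
decomposition of `A`, on the range summand `A` is invertible and conjugates `T` into `-T`, while
on the kernel summand `A` is nilpotent, hence so is `T`. A nilpotent map is
conjugate to its negative: split off a cyclic subspace spanned by `v, f v, …, f^(k-1) v` with an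
invariant complement, act there by `(-1)^i` on `f^i v`, and induct on the dimension.
-/

open Module Submodule Set

theorem add_mul_commutator_eq_neg {R : Type*} [Ring R] {m n : R} (hm : m * m = 0)
    (hn : n * n = 0) : (m + n) * (m * n - n * m) = -((m * n - n * m) * (m + n)) := by
  have hm' : ∀ x, m * (m * x) = 0 := fun x => by rw [← mul_assoc, hm, zero_mul]
  have hn' : ∀ x, n * (n * x) = 0 := fun x => by rw [← mul_assoc, hn, zero_mul]
  simp only [mul_add, add_mul, mul_sub, sub_mul, mul_assoc, hm, hn, hm', hn', mul_zero]
  abel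

theorem commutator_sq_eq_add_pow_four {R : Type*} [Ring R] {m n : R} (hm : m * m = 0)
    (hn : n * n = 0) : (m * n - n * m) ^ 2 = (m + n) ^ 4 := by
  have hm' : ∀ x, m * (m * x) = 0 := fun x => by rw [← mul_assoc, hm, zero_mul]
  have hn' : ∀ x, n * (n * x) = 0 := fun x => by rw [← mul_assoc, hn, zero_mul]
  simp only [pow_succ, pow_zero, one_mul, mul_add, add_mul, mul_sub, sub_mul, mul_assoc, hm, hn,
    hm', hn', mul_zero, zero_mul]
  abel

namespace Module.End

section Ring

variable {R M : Type*} [Ring R] [AddCommGroup M] [Module R M]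

theorem mapsTo_ker_of_commute {t b : End R M} (h : Commute t b) :
    MapsTo t (LinearMap.ker b) (LinearMap.ker b) := fun x hx => by
  rw [SetLike.mem_coe, LinearMap.mem_ker] at hx ⊢
  rw [← mul_apply, ← h.eq, mul_apply, hx, map_zero]

theorem mapsTo_range_of_commute {t b : End R M} (h : Commute t b) :
    MapsTo t (LinearMap.range b) (LinearMap.range b) := by
  rintro _ ⟨y, rfl⟩
  exact ⟨t y, by rw [← mul_apply, ← h.eq, mul_apply]⟩

theorem isConj_of_isCompl {f g : End R M} {p q : Submodule R M} (h : IsCompl p q)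
    (hfp : MapsTo f p p) (hfq : MapsTo f q q) (hgp : MapsTo g p p) (hgq : MapsTo g q q)
    (hp : IsConj (f.restrict hfp) (g.restrict hgp))
    (hq : IsConj (f.restrict hfq) (g.restrict hgq)) :
    IsConj f g := by
  let e := prodEquivOfIsCompl p q h
  have conj_prodMap (u : End R M) (hup : MapsTo u p p) (huq : MapsTo u q q) :
      e.conjRingEquiv ((u.restrict hup).prodMap (u.restrict huq)) = u := by
    refine LinearMap.ext fun x => ?_
    obtain ⟨y, rfl⟩ := e.surjective x
    change e ((u.restrict hup).prodMap (u.restrict huq) (e.symm (e y))) = u (e y)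
    rw [e.symm_apply_apply]
    exact (map_add u _ _).symm
  obtain ⟨c, hc⟩ := hp
  obtain ⟨d, hd⟩ := hq
  have hpair : IsConj ((f.restrict hfp, f.restrict hfq) : End R p × End R q)
      (g.restrict hgp, g.restrict hgq) :=
    ⟨MulEquiv.prodUnits.symm (c, d), Prod.ext hc hd⟩
  rw [← conj_prodMap f hfp hfq, ← conj_prodMap g hgp hgq]
  exact e.conjRingEquiv.toMonoidHom.map_isConj
    ((LinearMap.prodMapRingHom R p q).toMonoidHom.map_isConj hpair)

theorem isConj_neg_of_isCompl {f : End R M} {p q : Submodule R M} (h : IsCompl p q)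
    (hp : MapsTo f p p) (hq : MapsTo f q q)
    (hfp : IsConj (f.restrict hp) (-f.restrict hp))
    (hfq : IsConj (f.restrict hq) (-f.restrict hq)) :
    IsConj f (-f) :=
  isConj_of_isCompl h hp hq (fun _ hx => neg_mem (hp hx)) (fun _ hx => neg_mem (hq hx)) hfp hfq

end Ring

variable {K V : Type*} [Field K] [AddCommGroup V] [Module K V]

def krylov (f : End K V) (v : V) (k : ℕ) : Submodule K V :=
  span K (range fun i : Fin k => (f ^ (i : ℕ)) v)

section Krylov

variable {f : End K V} {v : V} {φ : Dual K V} {k : ℕ}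

theorem pow_apply_mem_krylov (hv : (f ^ k) v = 0) (j : ℕ) : (f ^ j) v ∈ krylov f v k := by
  by_cases hj : j < k
  · exact subset_span ⟨⟨j, hj⟩, rfl⟩
  · rw [← Nat.sub_add_cancel (not_lt.mp hj), pow_add, mul_apply, hv, map_zero]
    exact zero_mem _

theorem mapsTo_krylov (hv : (f ^ k) v = 0) : MapsTo f (krylov f v k) (krylov f v k) := by
  have : krylov f v k ≤ (krylov f v k).comap f := span_le.mpr <| by
    rintro _ ⟨i, rfl⟩
    rw [SetLike.mem_coe, mem_comap, ← mul_apply, ← pow_succ']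
    exact pow_apply_mem_krylov hv _
  exact fun x hx => this hx

theorem dualMap_pow_apply (j : ℕ) (x : V) : (f.dualMap ^ j) φ x = φ ((f ^ j) x) := by
  induction j generalizing φ with
  | zero => rfl
  | succ j ih => rw [pow_succ, mul_apply, ih, LinearMap.dualMap_apply, ← mul_apply, ← pow_succ']

theorem mapsTo_dualCoannihilator {Φ : Submodule K (Dual K V)} (hΦ : MapsTo f.dualMap Φ Φ) :
    MapsTo f Φ.dualCoannihilator Φ.dualCoannihilator := fun x hx => by
  simp only [SetLike.mem_coe, mem_dualCoannihilator] at hx ⊢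
  exact fun ψ hψ => hx _ (hΦ hψ)

-- The matrix `(φ ((f ^ (j + i)) v))ᵢⱼ` is anti-triangular with nonzero anti-diagonal: test the
-- first nonzero coefficient `c m` against `φ ∘ f ^ (k - 1 - m)`.
theorem coeff_eq_zero_of_dual_pow_apply_eq_zero (hv : (f ^ k) v = 0)
    (hφ : φ ((f ^ (k - 1)) v) ≠ 0) {c : Fin k → K}
    (hc : ∀ j < k, φ ((f ^ j) (∑ i, c i • (f ^ (i : ℕ)) v)) = 0) : c = 0 := by
  by_contra hne
  obtain ⟨m, hm, hmin⟩ : ∃ m : Fin k, c m ≠ 0 ∧ ∀ i < m, c i = 0 := by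
    obtain ⟨i, hi⟩ := Function.ne_iff.mp hne
    obtain ⟨m, hm, hmin⟩ := wellFounded_lt.has_min {i | c i ≠ 0} ⟨i, hi⟩
    exact ⟨m, hm, fun i hi => by_contra fun h => hmin i h hi⟩
  have hsum :
      φ ((f ^ (k - 1 - m)) (∑ i, c i • (f ^ (i : ℕ)) v)) = c m * φ ((f ^ (k - 1)) v) := by
    simp only [map_sum, map_smul, ← mul_apply, ← pow_add, smul_eq_mul]
    rw [Finset.sum_eq_single m]
    · rw [show k - 1 - m + m = k - 1 by omega]
    · intro i _ hi
      rcases lt_or_gt_of_ne hi with hlt | hgt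
      · rw [hmin i hlt, zero_mul]
      · rw [← Nat.sub_add_cancel (show k ≤ k - 1 - m + i by omega), pow_add, mul_apply, hv,
          map_zero, map_zero, mul_zero]
    · simp
  rw [hc _ (by omega)] at hsum
  exact mul_ne_zero hm hφ hsum.symm

theorem linearIndependent_pow_apply (hv : (f ^ k) v = 0) (hφ : φ ((f ^ (k - 1)) v) ≠ 0) :
    LinearIndependent K (fun i : Fin k => (f ^ (i : ℕ)) v) :=
  Fintype.linearIndependent_iff.mpr fun c hc => congrFun <|
    coeff_eq_zero_of_dual_pow_apply_eq_zero hv hφ fun j _ => by rw [hc, map_zero, map_zero]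

theorem isCompl_krylov_dualCoannihilator [FiniteDimensional K V] (hk : f ^ k = 0)
    (hφ : φ ((f ^ (k - 1)) v) ≠ 0) :
    IsCompl (krylov f v k) (krylov f.dualMap φ k).dualCoannihilator := by
  have hv : (f ^ k) v = 0 := by rw [hk, LinearMap.zero_apply]
  refine (isCompl_iff_disjoint _ _ ?_).mpr ?_
  · have h₁ : finrank K (krylov f v k) = k := by
      rw [krylov, finrank_span_eq_card (linearIndependent_pow_apply hv hφ), Fintype.card_fin]
    have h₂ : finrank K (krylov f.dualMap φ k) ≤ k :=
      (finrank_range_le_card _).trans_eq (Fintype.card_fin k)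
    have h₃ := Subspace.finrank_add_finrank_dualCoannihilator_eq (krylov f.dualMap φ k)
    omega
  · rw [disjoint_def]
    intro x hx hx'
    obtain ⟨c, rfl⟩ := (mem_span_range_iff_exists_fun K).mp hx
    have hc := coeff_eq_zero_of_dual_pow_apply_eq_zero hv hφ (c := c) fun j hj => by
      rw [← dualMap_pow_apply]
      exact (mem_dualCoannihilator _).mp hx' _ (subset_span ⟨⟨j, hj⟩, rfl⟩)
    simp [hc]

theorem isConj_neg_restrict_krylov (hv : (f ^ k) v = 0)
    (hli : LinearIndependent K (fun i : Fin k => (f ^ (i : ℕ)) v)) :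
    IsConj (f.restrict (mapsTo_krylov hv)) (-f.restrict (mapsTo_krylov hv)) := by
  let b : Basis (Fin k) K (krylov f v k) := Basis.span hli
  let w (j : ℕ) : krylov f v k := ⟨(f ^ j) v, pow_apply_mem_krylov hv j⟩
  let s : End K (krylov f v k) := b.constr K fun i => (-1 : K) ^ (i : ℕ) • b i
  have hb : ∀ i : Fin k, b i = w i := Basis.span_apply hli
  have hs (j : ℕ) : s (w j) = (-1 : K) ^ j • w j := by
    by_cases hj : j < k
    · have h := b.constr_basis K (fun i => (-1 : K) ^ (i : ℕ) • b i) ⟨j, hj⟩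
      rwa [hb] at h
    · have : w j = 0 := Subtype.ext <| by
        simp only [w, ZeroMemClass.coe_zero]
        rw [← Nat.sub_add_cancel (not_lt.mp hj), pow_add, mul_apply, hv, map_zero]
      simp [this]
  have hss : s * s = 1 := b.ext fun i => by
    rw [mul_apply, hb, hs, map_smul, hs, smul_smul, ← mul_pow]
    simp
  have hfw (j : ℕ) : f.restrict (mapsTo_krylov hv) (w j) = w (j + 1) := Subtype.ext <| by
    change f ((f ^ j) v) = (f ^ (j + 1)) v
    rw [pow_succ', mul_apply]
  refine ⟨⟨s, s, hss, hss⟩, b.ext fun i => ?_⟩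
  simp only [mul_apply, LinearMap.neg_apply, hb, hfw, hs, map_smul, pow_succ]
  simp

end Krylov

theorem isConj_neg_of_isNilpotent [FiniteDimensional K V] {f : End K V} (hf : IsNilpotent f) :
    IsConj f (-f) := by
  induction hn : finrank K V using Nat.strong_induction_on generalizing V with
  | _ n ih =>
  rcases subsingleton_or_nontrivial V with hV | hV
  · rw [Subsingleton.elim (-f) f]
  set k := nilpotencyClass f
  have hk : f ^ k = 0 := pow_nilpotencyClass hf
  obtain ⟨v, hv⟩ : ∃ v, (f ^ (k - 1)) v ≠ 0 := by
    by_contra! h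
    exact pow_pred_nilpotencyClass hf (LinearMap.ext h)
  obtain ⟨φ, hφ⟩ : ∃ φ : Dual K V, φ ((f ^ (k - 1)) v) ≠ 0 := by
    by_contra! h
    exact hv ((forall_dual_apply_eq_zero_iff K _).mp h)
  have hfv : (f ^ k) v = 0 := by rw [hk, LinearMap.zero_apply]
  have hfφ : (f.dualMap ^ k) φ = 0 := LinearMap.ext fun x => by
    rw [dualMap_pow_apply, hk, LinearMap.zero_apply, map_zero, LinearMap.zero_apply]
  have hcompl := isCompl_krylov_dualCoannihilator hk hφ
  have hU := mapsTo_dualCoannihilator (mapsTo_krylov hfφ)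
  have hW : krylov f v k ≠ ⊥ :=
    (Submodule.ne_bot_iff _).mpr ⟨_, pow_apply_mem_krylov hfv (k - 1), hv⟩
  have hdim := Submodule.finrank_add_eq_of_isCompl hcompl
  have hWdim := Submodule.finrank_eq_zero.not.mpr hW
  refine isConj_neg_of_isCompl hcompl (mapsTo_krylov hfv) hU
    (isConj_neg_restrict_krylov hfv (linearIndependent_pow_apply hfv hφ)) ?_
  exact ih _ (by omega) (isNilpotent.restrict hU hf) rfl

theorem isUnit_restrict_range_pow [FiniteDimensional K V] {a : End K V} {k : ℕ} (hk : k ≠ 0)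
    (h : Disjoint (LinearMap.ker (a ^ k)) (LinearMap.range (a ^ k))) :
    IsUnit (a.restrict (mapsTo_range_of_commute (Commute.self_pow a k))) := by
  have hker : LinearMap.ker a ≤ LinearMap.ker (a ^ k) := by
    rw [← Nat.sub_add_cancel (Nat.one_le_iff_ne_zero.mpr hk), pow_succ]
    exact LinearMap.ker_le_ker_comp a _
  refine (LinearMap.isUnit_iff_ker_eq_bot _).mpr (LinearMap.ker_eq_bot'.mpr fun x hx => ?_)
  exact Subtype.ext (disjoint_def.mp h _ (hker (congrArg Subtype.val hx)) x.2)

theorem isConj_neg_of_anticommute [FiniteDimensional K V] {t a : End K V}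
    (hanti : a * t = -(t * a)) (hsq : t ^ 2 = a ^ 4) : IsConj t (-t) := by
  have hcomm₂ : Commute t (a ^ 2) := by
    rw [Commute, SemiconjBy, pow_two, ← mul_assoc, mul_assoc a a t, hanti, mul_neg, ← mul_assoc,
      hanti, neg_mul, neg_neg]
  obtain ⟨N, hN⟩ := Filter.eventually_atTop.mp a.eventually_isCompl_ker_pow_range_pow
  -- an even exponent, since `t` only commutes with the even powers of `a`
  obtain ⟨k, hk, hcomm, hcompl⟩ : ∃ k ≠ 0, Commute t (a ^ k) ∧
      IsCompl (LinearMap.ker (a ^ k)) (LinearMap.range (a ^ k)) :=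
    ⟨2 * (N + 1), by omega, by rw [pow_mul]; exact hcomm₂.pow_right _, hN _ (by omega)⟩
  refine isConj_neg_of_isCompl hcompl (mapsTo_ker_of_commute hcomm)
    (mapsTo_range_of_commute hcomm) ?_ ?_
  · refine isConj_neg_of_isNilpotent ⟨2 * k, LinearMap.ext fun x => Subtype.ext ?_⟩
    have hx : (a ^ k) x = 0 := x.2
    have ht : t ^ (2 * k) = a ^ (3 * k) * a ^ k := by
      rw [pow_mul, hsq, ← pow_mul, ← pow_add]
      ring_nf
    rw [pow_restrict _ (mapsTo_ker_of_commute hcomm), LinearMap.coe_restrict_apply, ht, mul_apply,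
      hx, map_zero]
    rfl
  · obtain ⟨u, hu⟩ := isUnit_restrict_range_pow hk hcompl.disjoint
    refine ⟨u, LinearMap.ext fun x => Subtype.ext ?_⟩
    rw [hu]
    exact LinearMap.congr_fun hanti x

theorem isConj_neg_commutator [FiniteDimensional K V] {m n : End K V} (hm : m * m = 0)
    (hn : n * n = 0) : IsConj (m * n - n * m) (-(m * n - n * m)) :=
  isConj_neg_of_anticommute (add_mul_commutator_eq_neg hm hn) (commutator_sq_eq_add_pow_four hm hn)

end Module.End

/-- If an `n × n` complex matrix is a commutator of two square-zero matrices,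
then it is similar to its negative. -/
theorem stmt_9 {n : ℕ} (T M N : Matrix (Fin n) (Fin n) ℂ)
    (hM : M * M = 0) (hN : N * N = 0) (hT : T = M * N - N * M) :
    ∃ S : (Matrix (Fin n) (Fin n) ℂ)ˣ,
      (↑S⁻¹ : Matrix (Fin n) (Fin n) ℂ) * T * (↑S : Matrix (Fin n) (Fin n) ℂ) = -T := by
  let E : Matrix (Fin n) (Fin n) ℂ ≃ₐ[ℂ] End ℂ (Fin n → ℂ) := Matrix.toLinAlgEquiv'
  have hE : IsConj (E T) (-E T) := by
    rw [hT, map_sub, map_mul, map_mul]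
    exact Module.End.isConj_neg_commutator (by rw [← map_mul, hM, map_zero])
      (by rw [← map_mul, hN, map_zero])
  have hT' : IsConj T (-T) := by
    simpa using (E.symm : End ℂ (Fin n → ℂ) →* Matrix (Fin n) (Fin n) ℂ).map_isConj hE
  obtain ⟨S, hS⟩ := hT'.symm
  exact ⟨S, by rw [mul_assoc, ← hS.eq, Units.inv_mul_cancel_left]⟩
end

section
/- If T = MN - NM with M² = 0 = N² on a Hilbert space, then the approximate point spectrum of T equals the approximate point spectrum of -T. -/
/-- The approximate point spectrum of an operator. -/
def approxPointSpectrum {E : Type*} [NormedAddCommGroup E] [NormedSpace ℂ E]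
    (T : E →L[ℂ] E) : Set ℂ :=
  {lam : ℂ | ∀ ε > 0, ∃ x : E, ‖x‖ = 1 ∧ ‖T x - lam • x‖ < ε}

section Aux

variable {H : Type*} [NormedAddCommGroup H] [NormedSpace ℂ H]

/-- Key quantitative step: if `x` is a good approximate eigenvector of
`MN - NM` for `lam ≠ 0` and `‖MN x‖` is not too small, then `N M N x`
(normalized) is an approximate eigenvector for `-lam`. -/
lemma keyA (M N : H →L[ℂ] H) (hM : M * M = 0) (hN : N * N = 0)
    (lam : ℂ) (hlam : lam ≠ 0) (ε δ : ℝ) (hε : 0 < ε) (hδ : 0 < δ)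
    (hδ2 : (‖M‖ + 1) * (‖N‖ + 1) * δ ≤ ‖lam‖ ^ 2 / 8)
    (hδ3 : 8 * (‖M‖ + 1) ^ 2 * (‖N‖ + 1) ^ 2 * δ < ε * ‖lam‖ ^ 2)
    (x : H) (hx : ‖x‖ = 1)
    (hr : ‖(M * N - N * M) x - lam • x‖ < δ)
    (hu : ‖lam‖ / 4 ≤ ‖M (N x)‖) :
    ∃ y : H, ‖y‖ = 1 ∧ ‖(M * N - N * M) y + lam • y‖ < ε := by
  have hMM : ∀ z : H, M (M z) = 0 := fun z => by
    have := ContinuousLinearMap.ext_iff.mp hM z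
    simpa [ContinuousLinearMap.mul_apply] using this
  have hNN : ∀ z : H, N (N z) = 0 := fun z => by
    have := ContinuousLinearMap.ext_iff.mp hN z
    simpa [ContinuousLinearMap.mul_apply] using this
  set a : ℝ := ‖M‖ + 1 with ha
  set b : ℝ := ‖N‖ + 1 with hb
  have ha0 : (0:ℝ) < a := by positivity
  have hb0 : (0:ℝ) < b := by positivity
  have hMa : ‖M‖ ≤ a := by simp [ha]
  have hNb : ‖N‖ ≤ b := by simp [hb]
  set L : ℝ := ‖lam‖ with hL
  have hL0 : (0:ℝ) < L := by simpa [hL] using norm_pos_iff.mpr hlam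
  clear_value a b L
  set r : H := M (N x) - N (M x) - lam • x with hrdef
  have hrδ : ‖r‖ < δ := by
    have : (M * N - N * M) x - lam • x = r := by
      simp [hrdef, ContinuousLinearMap.sub_apply, ContinuousLinearMap.mul_apply,
        sub_sub]
    rwa [this] at hr
  set u : H := M (N x) with hu'
  set y : H := N (M (N x)) with hy'
  clear_value r u y
  -- the two key algebraic identities
  have key1 : M y = lam • u + M (N r) := by
    simp [hy', hu', hrdef, map_sub, map_smul, hNN (M x)]
  have key2 : (M * N - N * M) y + lam • y = -(N (M (N r))) := by
    have h1 : N y = 0 := by rw [hy']; exact hNN (M (N x))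
    have h2 : N (M y) = lam • y + N (M (N r)) := by
      rw [key1]; simp [map_add, map_smul, hy', hu']
    simp [ContinuousLinearMap.sub_apply, ContinuousLinearMap.mul_apply, h1, h2]
  -- norm estimates
  have hMNr : ‖M (N r)‖ ≤ a * b * δ := by
    calc ‖M (N r)‖ ≤ ‖M‖ * ‖N r‖ := M.le_opNorm _
      _ ≤ ‖M‖ * (‖N‖ * ‖r‖) := by
          gcongr; exact N.le_opNorm _
      _ ≤ a * b * δ := by
          have h1 : ‖N‖ * ‖r‖ ≤ b * δ := by
            apply mul_le_mul hNb hrδ.le (norm_nonneg _) hb0.le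
          calc ‖M‖ * (‖N‖ * ‖r‖) ≤ a * (b * δ) :=
                mul_le_mul hMa h1 (by positivity) ha0.le
            _ = a * b * δ := by ring
  have hMy_lb : L ^ 2 / 8 ≤ ‖M y‖ := by
    have h1 : ‖lam • u‖ ≤ ‖M y‖ + ‖M (N r)‖ := by
      have : lam • u = M y - M (N r) := by rw [key1]; abel
      rw [this]; exact norm_sub_le _ _
    have h2 : ‖lam • u‖ = L * ‖u‖ := by rw [norm_smul, hL]
    have h3 : L * (L / 4) ≤ L * ‖u‖ := by
      apply mul_le_mul_of_nonneg_left hu hL0.le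
    have h4 : L * (L / 4) = L ^ 2 / 4 := by ring
    linarith [h1, h2, h3, h4, hMNr, hδ2]
  have hy_lb : L ^ 2 / 8 ≤ a * ‖y‖ := by
    have h1 : ‖M y‖ ≤ ‖M‖ * ‖y‖ := M.le_opNorm _
    have h2 : ‖M‖ * ‖y‖ ≤ a * ‖y‖ := by
      apply mul_le_mul_of_nonneg_right hMa (norm_nonneg _)
    linarith
  have hy0 : (0:ℝ) < ‖y‖ := by
    nlinarith [pow_pos hL0 2, norm_nonneg y, hy_lb, ha0]
  have hTy : ‖(M * N - N * M) y + lam • y‖ ≤ a * b ^ 2 * δ := by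
    rw [key2, norm_neg]
    calc ‖N (M (N r))‖ ≤ ‖N‖ * ‖M (N r)‖ := N.le_opNorm _
      _ ≤ b * (a * b * δ) := by
          apply mul_le_mul hNb hMNr (norm_nonneg _) hb0.le
      _ = a * b ^ 2 * δ := by ring
  refine ⟨‖y‖⁻¹ • y, ?_, ?_⟩
  · rw [norm_smul, norm_inv, norm_norm, inv_mul_cancel₀ hy0.ne']
  · have hlin : (M * N - N * M) (‖y‖⁻¹ • y) + lam • (‖y‖⁻¹ • y)
        = ‖y‖⁻¹ • ((M * N - N * M) y + lam • y) := by
      rw [ContinuousLinearMap.map_smul_of_tower, smul_comm lam, smul_add]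
    rw [hlin, norm_smul, norm_inv, norm_norm]
    rw [inv_mul_lt_iff₀ hy0]
    calc ‖(M * N - N * M) y + lam • y‖ ≤ a * b ^ 2 * δ := hTy
      _ < ‖y‖ * ε := by nlinarith [hy_lb, hδ3, mul_pos hε hy0]

/-- One inclusion of the main theorem. -/
lemma half (M N : H →L[ℂ] H) (hM : M * M = 0) (hN : N * N = 0) :
    approxPointSpectrum (M * N - N * M) ⊆ approxPointSpectrum (N * M - M * N) := by
  intro lam hlam ε hε
  by_cases h0 : lam = 0
  · obtain ⟨x, hx, hxT⟩ := hlam ε hε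
    refine ⟨x, hx, ?_⟩
    have : (N * M - M * N) x - lam • x = -((M * N - N * M) x - lam • x) := by
      subst h0; simp [ContinuousLinearMap.sub_apply]
    rw [this, norm_neg]; exact hxT
  · set a : ℝ := ‖M‖ + 1 with ha
    set b : ℝ := ‖N‖ + 1 with hb
    have ha0 : (0:ℝ) < a := by positivity
    have hb0 : (0:ℝ) < b := by positivity
    set L : ℝ := ‖lam‖ with hL
    have hL0 : (0:ℝ) < L := by simpa [hL] using norm_pos_iff.mpr h0
    clear_value a b L
    set δ : ℝ := min (L / 2) (min (L ^ 2 / 8 / (a * b)) (ε * L ^ 2 / (16 * a ^ 2 * b ^ 2))) with hδ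
    have hδ0 : 0 < δ := by
      apply lt_min (by positivity) (lt_min (by positivity) (by positivity))
    have hδ1 : δ ≤ L / 2 := min_le_left _ _
    have hδ2 : a * b * δ ≤ L ^ 2 / 8 := by
      have h' : δ ≤ L ^ 2 / 8 / (a * b) := le_trans (min_le_right _ _) (min_le_left _ _)
      calc a * b * δ ≤ a * b * (L ^ 2 / 8 / (a * b)) := by
            apply mul_le_mul_of_nonneg_left h' (by positivity)
        _ = L ^ 2 / 8 := by field_simp
    have hδ3 : 8 * a ^ 2 * b ^ 2 * δ < ε * L ^ 2 := by
      have h' : δ ≤ ε * L ^ 2 / (16 * a ^ 2 * b ^ 2) :=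
        le_trans (min_le_right _ _) (min_le_right _ _)
      have : 8 * a ^ 2 * b ^ 2 * δ ≤ 8 * a ^ 2 * b ^ 2 * (ε * L ^ 2 / (16 * a ^ 2 * b ^ 2)) := by
        apply mul_le_mul_of_nonneg_left h' (by positivity)
      have heq : 8 * a ^ 2 * b ^ 2 * (ε * L ^ 2 / (16 * a ^ 2 * b ^ 2)) = ε * L ^ 2 / 2 := by
        field_simp; ring
      nlinarith [mul_pos hε (pow_pos hL0 2)]
    rw [ha, hb] at hδ2 hδ3
    rw [hL] at hδ2 hδ3
    obtain ⟨x, hx, hxT⟩ := hlam δ hδ0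
    -- ‖M (N x)‖ + ‖N (M x)‖ ≥ L - δ ≥ L/2
    have hsum : L / 2 ≤ ‖M (N x)‖ + ‖N (M x)‖ := by
      have h1 : ‖lam • x‖ = L := by rw [norm_smul, hx, mul_one, hL]
      have h2 : ‖lam • x‖ ≤ ‖(M * N - N * M) x‖ + δ := by
        have : lam • x = (M * N - N * M) x - ((M * N - N * M) x - lam • x) := by abel
        rw [this]
        exact le_trans (norm_sub_le _ _) (by linarith [hxT])
      have h3 : ‖(M * N - N * M) x‖ ≤ ‖M (N x)‖ + ‖N (M x)‖ := by
        have : (M * N - N * M) x = M (N x) - N (M x) := by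
          simp [ContinuousLinearMap.sub_apply, ContinuousLinearMap.mul_apply]
        rw [this]; exact norm_sub_le _ _
      linarith
    rw [hL] at hsum
    rcases le_or_gt (‖lam‖ / 4) ‖M (N x)‖ with hcase | hcase
    · obtain ⟨y, hy1, hy2⟩ := keyA M N hM hN lam h0 ε δ hε hδ0 hδ2 hδ3 x hx hxT hcase
      refine ⟨y, hy1, ?_⟩
      have : (N * M - M * N) y - lam • y = -((M * N - N * M) y + lam • y) := by
        simp [ContinuousLinearMap.sub_apply]; abel
      rw [this, norm_neg]; exact hy2
    · have hcase' : ‖lam‖ / 4 ≤ ‖N (M x)‖ := by linarith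
      have hxT' : ‖(N * M - M * N) x - (-lam) • x‖ < δ := by
        have : (N * M - M * N) x - (-lam) • x = -((M * N - N * M) x - lam • x) := by
          simp [ContinuousLinearMap.sub_apply]; abel
        rw [this, norm_neg]; exact hxT
      have hδ2' : (‖N‖ + 1) * (‖M‖ + 1) * δ ≤ ‖(-lam)‖ ^ 2 / 8 := by
        rw [norm_neg]
        calc (‖N‖ + 1) * (‖M‖ + 1) * δ = (‖M‖ + 1) * (‖N‖ + 1) * δ := by ring
          _ ≤ ‖lam‖ ^ 2 / 8 := hδ2
      have hδ3' : 8 * (‖N‖ + 1) ^ 2 * (‖M‖ + 1) ^ 2 * δ < ε * ‖(-lam)‖ ^ 2 := by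
        rw [norm_neg]
        calc 8 * (‖N‖ + 1) ^ 2 * (‖M‖ + 1) ^ 2 * δ
            = 8 * (‖M‖ + 1) ^ 2 * (‖N‖ + 1) ^ 2 * δ := by ring
          _ < ε * ‖lam‖ ^ 2 := hδ3
      have hcase'' : ‖(-lam)‖ / 4 ≤ ‖N (M x)‖ := by rwa [norm_neg]
      obtain ⟨y, hy1, hy2⟩ := keyA N M hN hM (-lam) (neg_ne_zero.mpr h0) ε δ hε hδ0
        hδ2' hδ3' x hx hxT' hcase''
      refine ⟨y, hy1, ?_⟩
      have : (N * M - M * N) y - lam • y = (N * M - M * N) y + (-lam) • y := by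
        rw [neg_smul]; abel
      rw [this]; exact hy2

end Aux

/-- If `T = MN - NM` with `M² = 0 = N²`, then `σ_ap(T) = σ_ap(-T)`. -/
theorem stmt_10 {H : Type*} [NormedAddCommGroup H] [InnerProductSpace ℂ H]
    [CompleteSpace H] (M N T : H →L[ℂ] H) (hM : M * M = 0) (hN : N * N = 0)
    (hT : T = M * N - N * M) :
    approxPointSpectrum T = approxPointSpectrum (-T) := by
  subst hT
  have h1 : -(M * N - N * M) = N * M - M * N := by rw [neg_sub]
  rw [h1]
  apply Set.Subset.antisymm
  · exact half M N hM hN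
  · have := half N M hN hM
    rwa [show N * M - M * N = N * M - M * N from rfl] at this
end

section
/- For any Banach spaces X, Y and bounded operators S : X → Y, R : Y → X, the nonzero approximate point spectra of RS and SR coincide: σ_ap(RS) \ {0} = σ_ap(SR) \ {0}. -/
lemma aux_dir {X Y : Type*}
    [NormedAddCommGroup X] [NormedSpace ℂ X]
    [NormedAddCommGroup Y] [NormedSpace ℂ Y]
    (S : X →L[ℂ] Y) (R : Y →L[ℂ] X) {lam : ℂ} (hlam : lam ≠ 0)
    (h : lam ∈ approxPointSpectrum (R.comp S)) :
    lam ∈ approxPointSpectrum (S.comp R) := by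
  intro δ hδ
  set a : ℝ := ‖lam‖ with ha
  have ha0 : 0 < a := norm_pos_iff.mpr hlam
  set A : ℝ := ‖S‖ + 1 with hA
  set B : ℝ := ‖R‖ + 1 with hB
  have hA0 : 0 < A := by positivity
  have hB0 : 0 < B := by positivity
  set ε : ℝ := min (a / 2) (δ * a / (4 * A * B)) with hε
  have hε0 : 0 < ε := lt_min (by positivity) (by positivity)
  obtain ⟨x, hx1, hx2⟩ := h ε hε0
  set y : Y := S x with hy
  -- lower bound on ‖y‖
  have h1 : a ≤ ‖R‖ * ‖y‖ + ε := by
    have : ‖lam • x‖ ≤ ‖(R.comp S) x‖ + ‖(R.comp S) x - lam • x‖ := by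
      have htri := norm_add_le ((R.comp S) x - lam • x) ((R.comp S) x)
      calc ‖lam • x‖ = ‖(R.comp S) x - ((R.comp S) x - lam • x)‖ := by rw [sub_sub_cancel]
        _ ≤ ‖(R.comp S) x‖ + ‖(R.comp S) x - lam • x‖ := norm_sub_le _ _
    have hsx : ‖lam • x‖ = a := by rw [norm_smul, hx1, mul_one]
    have hRSx : ‖(R.comp S) x‖ ≤ ‖R‖ * ‖y‖ := by
      simpa [hy] using R.le_opNorm (S x)
    nlinarith [hx2.le]
  have hεa : ε ≤ a / 2 := min_le_left _ _
  have hylb : a / (2 * B) ≤ ‖y‖ := by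
    have hRB : ‖R‖ * ‖y‖ ≤ B * ‖y‖ := by
      have : (0:ℝ) ≤ ‖y‖ := norm_nonneg _
      nlinarith
    rw [div_le_iff₀ (by positivity)]
    nlinarith
  have hy0 : (0:ℝ) < ‖y‖ := lt_of_lt_of_le (by positivity) hylb
  -- candidate vector
  set c : ℂ := ((‖y‖ : ℂ))⁻¹ with hc
  refine ⟨c • y, ?_, ?_⟩
  · rw [norm_smul]
    have : ‖c‖ = ‖y‖⁻¹ := by
      simp [hc]
    rw [this, inv_mul_cancel₀ (ne_of_gt hy0)]
  · have hkey : (S.comp R) (c • y) - lam • (c • y) = c • (S ((R.comp S) x - lam • x)) := by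
      simp only [map_smul, smul_sub, map_sub, map_smul]
      rw [smul_comm lam c]
      simp [hy]
    rw [hkey, norm_smul]
    have hcn : ‖c‖ = ‖y‖⁻¹ := by simp [hc]
    rw [hcn]
    have hS : ‖S ((R.comp S) x - lam • x)‖ ≤ A * ε := by
      calc ‖S ((R.comp S) x - lam • x)‖ ≤ ‖S‖ * ‖(R.comp S) x - lam • x‖ := S.le_opNorm _
        _ ≤ A * ε := by
            have := hx2.le
            have hSnn : (0:ℝ) ≤ ‖S‖ := norm_nonneg _
            nlinarith [norm_nonneg ((R.comp S) x - lam • x)]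
    have hinv : ‖y‖⁻¹ ≤ 2 * B / a := by
      rw [inv_le_comm₀ hy0 (by positivity)]
      calc (2 * B / a)⁻¹ = a / (2 * B) := by rw [inv_div]
        _ ≤ ‖y‖ := hylb
    have hεb : ε ≤ δ * a / (4 * A * B) := min_le_right _ _
    calc ‖y‖⁻¹ * ‖S ((R.comp S) x - lam • x)‖
        ≤ (2 * B / a) * (A * ε) := by
          apply mul_le_mul hinv hS (norm_nonneg _) (by positivity)
      _ ≤ (2 * B / a) * (A * (δ * a / (4 * A * B))) := by
          apply mul_le_mul_of_nonneg_left _ (by positivity)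
          exact mul_le_mul_of_nonneg_left hεb (le_of_lt hA0)
      _ = δ / 2 := by field_simp; ring
      _ < δ := by linarith

/-- (Barnes) For Banach spaces `X, Y` and bounded operators `S : X → Y`,
`R : Y → X`, we have `σ_ap(RS) \ {0} = σ_ap(SR) \ {0}`. -/
theorem stmt_11 {X Y : Type*}
    [NormedAddCommGroup X] [NormedSpace ℂ X] [CompleteSpace X]
    [NormedAddCommGroup Y] [NormedSpace ℂ Y] [CompleteSpace Y]
    (S : X →L[ℂ] Y) (R : Y →L[ℂ] X) :
    approxPointSpectrum (R.comp S) \ {0} = approxPointSpectrum (S.comp R) \ {0} := by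
  ext lam
  simp only [Set.mem_diff, Set.mem_singleton_iff]
  constructor
  · rintro ⟨h, h0⟩
    exact ⟨aux_dir S R h0 h, h0⟩
  · rintro ⟨h, h0⟩
    exact ⟨aux_dir R S h0 h, h0⟩
end

section
/- The direct sum of μ copies of the 2×2 nilpotent Jordan block J₂ is a commutator of two square-zero matrices if and only if μ is even. -/
open Module Submodule LinearMap Matrix Kronecker

/-- The `2 × 2` nilpotent Jordan block. -/
def J2 : Matrix (Fin 2) (Fin 2) ℂ := !![0, 1; 0, 0]

lemma aux_even {V : Type*} [AddCommGroup V] [Module ℂ V] [FiniteDimensional ℂ V]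
    (m n b c : V →ₗ[ℂ] V)
    (hm : m ∘ₗ m = 0) (hn : n ∘ₗ n = 0)
    (hmn : m ∘ₗ n = n ∘ₗ m) (hmb : m ∘ₗ b = b ∘ₗ m)
    (hrel : m ∘ₗ c + c ∘ₗ m - n ∘ₗ b - b ∘ₗ n = LinearMap.id) :
    Even (Module.finrank ℂ V) := by
  have hmn' : ∀ x, m (n x) = n (m x) := fun x => congrFun (congrArg DFunLike.coe hmn) x
  have hmb' : ∀ x, m (b x) = b (m x) := fun x => congrFun (congrArg DFunLike.coe hmb) x
  have hm' : ∀ x, m (m x) = 0 := fun x => congrFun (congrArg DFunLike.coe hm) x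
  have hn' : ∀ x, n (n x) = 0 := fun x => congrFun (congrArg DFunLike.coe hn) x
  have hrel' : ∀ x, m (c x) + c (m x) - n (b x) - b (n x) = x :=
    fun x => congrFun (congrArg DFunLike.coe hrel) x
  set E := LinearMap.range m with hE
  set F := LinearMap.ker m with hF
  set G := F ⊓ E.comap n with hG
  have hGF : G ≤ F := inf_le_left
  have hEF : E ≤ F := LinearMap.range_le_ker_iff.mpr hm
  have hEG : E ≤ G := by
    rintro x ⟨y, rfl⟩
    exact ⟨hEF ⟨y, rfl⟩, ⟨n y, (hmn' y)⟩⟩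
  have hnFG : Submodule.map n F ≤ G := by
    rintro x ⟨y, hy, rfl⟩
    have hy' : m y = 0 := hy
    exact ⟨by simpa [hF, LinearMap.mem_ker, hmn' y, hy'] , ⟨0, by simp [hn' y]⟩⟩
  have hGsup : G ≤ Submodule.map n F ⊔ E := by
    rintro x ⟨hxF, hxE⟩
    obtain ⟨w, hw⟩ : ∃ w, m w = n x := hxE
    have hmx : m x = 0 := hxF
    have key : x = n (-(b x)) + m (c x - b w) := by
      have h0 := hrel' x
      rw [hmx] at h0
      rw [map_neg, map_sub]
      have : b (n x) = m (b w) := by rw [← hw, hmb']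
      rw [this] at h0
      simp only [map_zero, add_zero] at h0
      linear_combination (norm := abel) -h0
    refine Submodule.mem_sup.mpr ⟨n (-(b x)), ⟨-(b x), ?_, rfl⟩, m (c x - b w), ⟨_, rfl⟩, key.symm⟩
    simp [hF, LinearMap.mem_ker, hmb' x, hmx]
  -- the quotient map argument
  set θ : F →ₗ[ℂ] (V ⧸ E) := E.mkQ ∘ₗ n ∘ₗ F.subtype with hθ
  have hker : LinearMap.ker θ = G.comap F.subtype := by
    ext x
    simp only [hθ, LinearMap.mem_ker, LinearMap.coe_comp, Function.comp_apply,
      Submodule.mkQ_apply, Submodule.Quotient.mk_eq_zero, Submodule.mem_comap,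
      Submodule.coe_subtype, hG, Submodule.mem_inf]
    exact ⟨fun h => ⟨x.2, h⟩, fun h => h.2⟩
  have hrange : LinearMap.range θ = G.map E.mkQ := by
    have h1 : LinearMap.range θ = (Submodule.map n F).map E.mkQ := by
      rw [hθ, LinearMap.range_comp, LinearMap.range_comp, Submodule.range_subtype]
    rw [h1]
    apply le_antisymm (Submodule.map_mono hnFG)
    have h2 : G.map E.mkQ ≤ (Submodule.map n F ⊔ E).map E.mkQ := Submodule.map_mono hGsup
    have hEbot : Submodule.map E.mkQ E = ⊥ := by
      refine le_antisymm ?_ bot_le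
      rintro x ⟨y, hy, rfl⟩
      simpa [Submodule.Quotient.mk_eq_zero] using hy
    rwa [Submodule.map_sup, hEbot, sup_bot_eq] at h2
  -- rank computations
  set θ2 : G →ₗ[ℂ] (V ⧸ E) := E.mkQ ∘ₗ G.subtype with hθ2
  have hker2 : LinearMap.ker θ2 = E.comap G.subtype := by
    ext x; simp [hθ2, Submodule.Quotient.mk_eq_zero]
  have hrange2 : LinearMap.range θ2 = G.map E.mkQ := by
    rw [hθ2, LinearMap.range_comp, Submodule.range_subtype]
  have e1 : finrank ℂ (LinearMap.range θ2) + finrank ℂ (LinearMap.ker θ2) = finrank ℂ G :=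
    LinearMap.finrank_range_add_finrank_ker θ2
  have e2 : finrank ℂ (LinearMap.range θ) + finrank ℂ (LinearMap.ker θ) = finrank ℂ F :=
    LinearMap.finrank_range_add_finrank_ker θ
  have e3 : finrank ℂ E + finrank ℂ F = finrank ℂ V := by
    rw [hE, hF]; exact LinearMap.finrank_range_add_finrank_ker m
  have eker : finrank ℂ (LinearMap.ker θ) = finrank ℂ G := by
    rw [hker]; exact (Submodule.comapSubtypeEquivOfLe hGF).finrank_eq
  have eker2 : finrank ℂ (LinearMap.ker θ2) = finrank ℂ E := by
    rw [hker2]; exact (Submodule.comapSubtypeEquivOfLe hEG).finrank_eq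
  have erange : finrank ℂ (LinearMap.range θ) = finrank ℂ (LinearMap.range θ2) := by
    rw [hrange, hrange2]
  refine ⟨finrank ℂ G, ?_⟩
  omega

lemma forward {μ : ℕ} (M N : Matrix (Fin 2 × Fin μ) (Fin 2 × Fin μ) ℂ)
    (hM : M * M = 0) (hN : N * N = 0)
    (hA : Matrix.blockDiagonal (fun _ : Fin μ => J2) = M * N - N * M) :
    Even μ := by
  set A : Matrix (Fin 2 × Fin μ) (Fin 2 × Fin μ) ℂ :=
    Matrix.blockDiagonal (fun _ : Fin μ => J2) with hAdef
  set e : Fin 2 × Fin μ ≃ Fin μ ⊕ Fin μ :=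
    (finTwoEquiv.prodCongr (Equiv.refl (Fin μ))).trans (Equiv.boolProdEquivSum (Fin μ)) with he
  set R := Matrix.reindexAlgEquiv ℂ ℂ e with hR
  -- block form of A
  have hblock : R A = Matrix.fromBlocks 0 1 0 0 := by
    ext i j
    have hsymm : ∀ k : Fin μ, e.symm (Sum.inl k) = (0, k) ∧ e.symm (Sum.inr k) = (1, k) := by
      intro k
      constructor <;> rfl
    cases i with
    | inl k =>
      cases j with
      | inl l =>
        simp [hR, Matrix.reindexAlgEquiv_apply, Matrix.reindex_apply, Matrix.submatrix_apply,
          (hsymm k).1, (hsymm l).1, hAdef, Matrix.blockDiagonal_apply, J2, Matrix.fromBlocks]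
      | inr l =>
        simp [hR, Matrix.reindexAlgEquiv_apply, Matrix.reindex_apply, Matrix.submatrix_apply,
          (hsymm k).1, (hsymm l).2, hAdef, Matrix.blockDiagonal_apply, J2, Matrix.fromBlocks,
          Matrix.one_apply]
    | inr k =>
      cases j with
      | inl l =>
        simp [hR, Matrix.reindexAlgEquiv_apply, Matrix.reindex_apply, Matrix.submatrix_apply,
          (hsymm k).2, (hsymm l).1, hAdef, Matrix.blockDiagonal_apply, J2, Matrix.fromBlocks]
      | inr l =>
        simp [hR, Matrix.reindexAlgEquiv_apply, Matrix.reindex_apply, Matrix.submatrix_apply,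
          (hsymm k).2, (hsymm l).2, hAdef, Matrix.blockDiagonal_apply, J2, Matrix.fromBlocks]
  -- anticommutation
  have hACM : A * M + M * A = 0 := by
    have h1 : A * M + M * A = M * M * N - N * (M * M) := by rw [hA]; noncomm_ring
    rw [hM] at h1; simpa using h1
  have hACN : A * N + N * A = 0 := by
    have h1 : A * N + N * A = M * (N * N) - N * N * M := by rw [hA]; noncomm_ring
    rw [hN] at h1; simpa using h1
  set M' := R M with hM'def
  set N' := R N with hN'def
  have hM2 : M' * M' = 0 := by rw [hM'def, ← _root_.map_mul, hM, map_zero]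
  have hN2 : N' * N' = 0 := by rw [hN'def, ← _root_.map_mul, hN, map_zero]
  have hA' : Matrix.fromBlocks 0 1 0 0 = M' * N' - N' * M' := by
    rw [← hblock, hA, map_sub, _root_.map_mul, _root_.map_mul]
  have hACM' : Matrix.fromBlocks 0 1 0 0 * M' + M' * Matrix.fromBlocks 0 1 0 0 = 0 := by
    have := congrArg R hACM
    rwa [map_add, _root_.map_mul, _root_.map_mul, map_zero, hblock] at this
  have hACN' : Matrix.fromBlocks 0 1 0 0 * N' + N' * Matrix.fromBlocks 0 1 0 0 = 0 := by
    have := congrArg R hACN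
    rwa [map_add, _root_.map_mul, _root_.map_mul, map_zero, hblock] at this
  clear hA hACM hACN hM hN hblock
  -- blocks of M' and N'
  obtain ⟨m, bb, m3, m4, hMb⟩ : ∃ a b c d, M' = Matrix.fromBlocks a b c d :=
    ⟨_, _, _, _, (Matrix.fromBlocks_toBlocks M').symm⟩
  obtain ⟨n, cc, n3, n4, hNb⟩ : ∃ a b c d, N' = Matrix.fromBlocks a b c d :=
    ⟨_, _, _, _, (Matrix.fromBlocks_toBlocks N').symm⟩
  rw [hMb] at hACM' hM2
  rw [hNb] at hACN' hN2
  rw [hMb, hNb] at hA'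
  rw [Matrix.fromBlocks_multiply] at hACM' hACN' hM2 hN2
  rw [Matrix.fromBlocks_multiply, Matrix.fromBlocks_multiply] at hA'
  rw [eq_sub_iff_add_eq] at hA'
  simp only [Matrix.fromBlocks_multiply, Matrix.fromBlocks_add, zero_mul, mul_zero, one_mul,
    mul_one, add_zero, zero_add] at hACM' hACN' hM2 hN2 hA'
  rw [show (0 : Matrix (Fin μ ⊕ Fin μ) (Fin μ ⊕ Fin μ) ℂ) = Matrix.fromBlocks 0 0 0 0 from
    Matrix.fromBlocks_zero.symm, Matrix.fromBlocks_inj] at hACM' hACN' hM2 hN2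
  rw [Matrix.fromBlocks_inj] at hA'
  obtain ⟨hm3, hm4, -, -⟩ := hACM'
  obtain ⟨hn3, hn4, -, -⟩ := hACN'
  have hm4' : m4 = -m := by linear_combination (norm := abel) hm4
  have hn4' : n4 = -n := by linear_combination (norm := abel) hn4
  subst hm3 hn3 hm4' hn4'
  simp only [mul_zero, zero_mul, add_zero, zero_add, Matrix.mul_neg, Matrix.neg_mul,
    neg_neg] at hM2 hN2 hA'
  obtain ⟨hmm, hmbb, -, -⟩ := hM2
  obtain ⟨hnn, hncc, -, -⟩ := hN2
  obtain ⟨hcomm, hrel, -, -⟩ := hA'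
  -- hmbb : m * bb + -(bb * m) = 0, hcomm : m * n + ... = n * m + ..., hrel : ... = 1
  have hmbb' : m * bb = bb * m := by linear_combination (norm := abel) hmbb
  have hmn' : m * n = n * m := hcomm.symm
  have hrel' : m * cc + cc * m = 1 + (n * bb + bb * n) := by
    linear_combination (norm := abel) -hrel
  -- pass to linear maps
  have Hm : m.mulVecLin ∘ₗ m.mulVecLin = 0 := by
    rw [← Matrix.mulVecLin_mul, hmm, Matrix.mulVecLin_zero]
  have Hn : n.mulVecLin ∘ₗ n.mulVecLin = 0 := by
    rw [← Matrix.mulVecLin_mul, hnn, Matrix.mulVecLin_zero]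
  have Hmn : m.mulVecLin ∘ₗ n.mulVecLin = n.mulVecLin ∘ₗ m.mulVecLin := by
    rw [← Matrix.mulVecLin_mul, ← Matrix.mulVecLin_mul, hmn']
  have Hmb : m.mulVecLin ∘ₗ bb.mulVecLin = bb.mulVecLin ∘ₗ m.mulVecLin := by
    rw [← Matrix.mulVecLin_mul, ← Matrix.mulVecLin_mul, hmbb']
  have Hrel : m.mulVecLin ∘ₗ cc.mulVecLin + cc.mulVecLin ∘ₗ m.mulVecLin -
      n.mulVecLin ∘ₗ bb.mulVecLin - bb.mulVecLin ∘ₗ n.mulVecLin = LinearMap.id := by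
    have h := congrArg Matrix.mulVecLin hrel'
    rw [Matrix.mulVecLin_add, Matrix.mulVecLin_add, Matrix.mulVecLin_add, Matrix.mulVecLin_one,
      Matrix.mulVecLin_mul, Matrix.mulVecLin_mul, Matrix.mulVecLin_mul,
      Matrix.mulVecLin_mul] at h
    rw [sub_sub, sub_eq_iff_eq_add]
    rw [h]
  have := aux_even m.mulVecLin n.mulVecLin bb.mulVecLin cc.mulVecLin Hm Hn Hmn Hmb Hrel
  rwa [Module.finrank_fin_fun] at this

lemma backward {μ : ℕ} (h : Even μ) :
    ∃ M N : Matrix (Fin 2 × Fin μ) (Fin 2 × Fin μ) ℂ,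
        M * M = 0 ∧ N * N = 0 ∧
        Matrix.blockDiagonal (fun _ : Fin μ => J2) = M * N - N * M := by
  obtain ⟨k, hk⟩ := h
  -- 2×2 ingredients
  set D : Matrix (Fin 2) (Fin 2) ℂ := !![(-1 : ℂ), 0; 0, 1] with hD
  set A00 : Matrix (Fin 2) (Fin 2) ℂ := !![(1 : ℂ), 0; 0, 0] with hA00
  set A11 : Matrix (Fin 2) (Fin 2) ℂ := !![(0 : ℂ), 0; 0, 1] with hA11
  have hJt : J2ᵀ = !![(0 : ℂ), 0; 1, 0] := by
    ext i j; fin_cases i <;> fin_cases j <;> simp [J2, Matrix.transpose_apply]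
  have hJJ : J2 * J2 = 0 := by
    ext i j; fin_cases i <;> fin_cases j <;>
      simp [J2, Matrix.mul_apply, Fin.sum_univ_two, Matrix.transpose_apply]
  have hJtJt : J2ᵀ * J2ᵀ = 0 := by
    rw [hJt]; ext i j; fin_cases i <;> fin_cases j <;>
      simp [J2, Matrix.mul_apply, Fin.sum_univ_two, Matrix.transpose_apply]
  have hDD : D * D = 1 := by
    ext i j; fin_cases i <;> fin_cases j <;>
      simp [hD, Matrix.mul_apply, Fin.sum_univ_two, Matrix.one_apply]
  have hJD : J2 * D = J2 := by
    ext i j; fin_cases i <;> fin_cases j <;>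
      simp [J2, hD, Matrix.mul_apply, Fin.sum_univ_two]
  have hDJ : D * J2 = -J2 := by
    ext i j; fin_cases i <;> fin_cases j <;>
      simp [J2, hD, Matrix.mul_apply, Fin.sum_univ_two]
  have hJJt : J2 * J2ᵀ = A00 := by
    rw [hJt]; ext i j; fin_cases i <;> fin_cases j <;>
      simp [J2, hA00, Matrix.mul_apply, Fin.sum_univ_two, Matrix.transpose_apply]
  have hJtJ : J2ᵀ * J2 = A11 := by
    rw [hJt]; ext i j; fin_cases i <;> fin_cases j <;>
      simp [J2, hA11, Matrix.mul_apply, Fin.sum_univ_two, Matrix.transpose_apply]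
  have hsum : A00 + A11 = 1 := by
    ext i j; fin_cases i <;> fin_cases j <;>
      simp [hA00, hA11, Matrix.one_apply]
  -- the matrices on the model index type
  set f : Fin 2 × Fin k ≃ Fin μ := finProdFinEquiv.trans (finCongr (by omega)) with hf
  set e2 : Fin 2 × (Fin 2 × Fin k) ≃ Fin 2 × Fin μ := (Equiv.refl (Fin 2)).prodCongr f with he2
  set R := Matrix.reindexAlgEquiv ℂ ℂ e2 with hR
  set Ik : Matrix (Fin k) (Fin k) ℂ := 1 with hIk
  set M₀ := J2 ⊗ₖ (J2 ⊗ₖ Ik) with hM₀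
  set N₀ := D ⊗ₖ (J2ᵀ ⊗ₖ Ik) with hN₀
  have hM0 : M₀ * M₀ = 0 := by
    rw [hM₀, ← Matrix.mul_kronecker_mul, hJJ, Matrix.zero_kronecker]
  have hN0 : N₀ * N₀ = 0 := by
    rw [hN₀, ← Matrix.mul_kronecker_mul, ← Matrix.mul_kronecker_mul, hJtJt, Matrix.zero_kronecker,
      Matrix.kronecker_zero]
  have hC0 : M₀ * N₀ - N₀ * M₀ = J2 ⊗ₖ (1 : Matrix (Fin 2 × Fin k) (Fin 2 × Fin k) ℂ) := by
    rw [hM₀, hN₀, ← Matrix.mul_kronecker_mul, ← Matrix.mul_kronecker_mul, ← Matrix.mul_kronecker_mul,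
      ← Matrix.mul_kronecker_mul, hJD, hDJ, hJJt, hJtJ, hIk, mul_one]
    rw [show ((-J2) ⊗ₖ (A11 ⊗ₖ (1 : Matrix (Fin k) (Fin k) ℂ))) =
        -(J2 ⊗ₖ (A11 ⊗ₖ (1 : Matrix (Fin k) (Fin k) ℂ))) from by
      simp [Matrix.kroneckerMap, Matrix.neg_apply]; rfl]
    rw [sub_neg_eq_add, ← Matrix.kronecker_add, ← Matrix.add_kronecker, hsum,
      Matrix.one_kronecker_one]
  refine ⟨R M₀, R N₀, ?_, ?_, ?_⟩
  · rw [← _root_.map_mul, hM0, map_zero]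
  · rw [← _root_.map_mul, hN0, map_zero]
  · have : R (M₀ * N₀ - N₀ * M₀) = R M₀ * R N₀ - R N₀ * R M₀ := by
      rw [map_sub, _root_.map_mul, _root_.map_mul]
    rw [← this, hC0]
    ext ⟨i, a⟩ ⟨j, b⟩
    have h1 : e2.symm (i, a) = (i, f.symm a) := rfl
    have h2 : e2.symm (j, b) = (j, f.symm b) := rfl
    rw [hR, Matrix.reindexAlgEquiv_apply, Matrix.reindex_apply, Matrix.submatrix_apply, h1, h2,
      Matrix.blockDiagonal_apply]
    simp only [Matrix.kroneckerMap_apply, Matrix.one_apply, EmbeddingLike.apply_eq_iff_eq,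
      mul_ite, mul_one, mul_zero]

/-- The direct sum of `μ` copies of `J₂` is a commutator of two square-zero
matrices iff `μ` is even. -/
theorem stmt_12 (μ : ℕ) :
    (∃ M N : Matrix (Fin 2 × Fin μ) (Fin 2 × Fin μ) ℂ,
        M * M = 0 ∧ N * N = 0 ∧
        Matrix.blockDiagonal (fun _ : Fin μ => J2) = M * N - N * M) ↔
      Even μ := by
  constructor
  · rintro ⟨M, N, hM, hN, hA⟩
    exact forward M N hM hN hA
  · exact backward
end

section
/- If a nilpotent matrix J ∈ M_n(ℂ) is a commutator of two square-zero matrices, then J^⌊(n+1)/2⌋ = 0. In particular, for n ≥ 4 the single Jordan block J_n is not a commutator of two square-zero matrices. -/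
open Matrix

/-- The `n × n` nilpotent Jordan block. -/
def jordanBlock (n : ℕ) : Matrix (Fin n) (Fin n) ℂ :=
  Matrix.of fun i j => if (i : ℕ) + 1 = (j : ℕ) then 1 else 0

lemma sq13_sandwich {R : Type*} [Ring R] (x y : R) (h : x * y = 0) (a b : ℕ) :
    x ^ (a+1) * y ^ (b+1) = 0 := by
  rw [pow_succ, pow_succ', mul_assoc, ← mul_assoc x y, h, zero_mul, mul_zero]

section aux
variable {n : ℕ} (M N : Matrix (Fin n) (Fin n) ℂ)

lemma sq13_TS (hN : N * N = 0) : (M*N) * (N*M) = 0 := by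
  rw [mul_assoc, ← mul_assoc N N M, hN, zero_mul, mul_zero]

lemma sq13_TN (hN : N * N = 0) (a : ℕ) : (M*N)^(a+1) * N = 0 := by
  rw [pow_succ, mul_assoc, mul_assoc, hN, mul_zero, mul_zero]

lemma sq13_MT (hM : M * M = 0) (a : ℕ) : M * (M*N)^(a+1) = 0 := by
  rw [pow_succ', ← mul_assoc, ← mul_assoc, hM, zero_mul, zero_mul]

lemma sq13_MS (s : ℕ) : M * (N*M)^s = (M*N)^s * M := by
  induction s with
  | zero => simp
  | succ s ih =>
      calc M * (N*M)^(s+1) = M*N*M*(N*M)^s := by rw [pow_succ', ← mul_assoc, ← mul_assoc]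
        _ = M*N*((M*N)^s*M) := by rw [mul_assoc, ih]
        _ = (M*N)^(s+1)*M := by rw [← mul_assoc, ← pow_succ']

end aux

/-- If we can exhibit matrices `X j`, `Y i` such that the pairing `(X j * Y i) p q` is
lower triangular with nonzero diagonal, then `k ≤ n`. -/
lemma sq13_rank {k n : ℕ} (X Y : Fin k → Matrix (Fin n) (Fin n) ℂ) (p q : Fin n) (d : ℂ)
    (hd : d ≠ 0) (hdiag : ∀ j, (X j * Y j) p q = d)
    (hup : ∀ j i : Fin k, j < i → (X j * Y i) p q = 0) : k ≤ n := by
  classical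
  set A : Matrix (Fin k) (Fin n) ℂ := Matrix.of fun j c => X j p c with hA
  set C : Matrix (Fin n) (Fin k) ℂ := Matrix.of fun c i => Y i c q with hC
  have hPji : ∀ j i, (A * C) j i = (X j * Y i) p q := by
    intro j i
    simp [hA, hC, Matrix.mul_apply]
  have hPlow : (A * C).BlockTriangular OrderDual.toDual := by
    intro i j hij
    rw [hPji]
    exact hup i j hij
  have hdet : (A * C).det ≠ 0 := by
    rw [Matrix.det_of_lowerTriangular _ hPlow]
    rw [Finset.prod_congr rfl fun j _ => (by rw [hPji, hdiag] : (A*C) j j = d),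
      Finset.prod_const]
    exact pow_ne_zero _ hd
  have hunit : IsUnit (A * C) := by
    rw [Matrix.isUnit_iff_isUnit_det]
    exact isUnit_iff_ne_zero.mpr hdet
  calc k = Fintype.card (Fin k) := (Fintype.card_fin k).symm
    _ = (A*C).rank := (Matrix.rank_of_isUnit _ hunit).symm
    _ ≤ A.rank := Matrix.rank_mul_le_left A C
    _ ≤ Fintype.card (Fin n) := Matrix.rank_le_card_width A
    _ = n := Fintype.card_fin n

/-- Key combinatorial bound: if `M² = N² = 0` and `(MN)^{t+1} = 0 ≠ (MN)^t`
then `2t+1 ≤ n`. -/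
lemma sq13_key {n : ℕ} (t : ℕ) (M N : Matrix (Fin n) (Fin n) ℂ)
    (hM : M * M = 0) (hN : N * N = 0)
    (h0 : (M*N)^(t+1) = 0) (h1 : (M*N)^t ≠ 0) : 2*t+1 ≤ n := by
  classical
  have hTbig : ∀ a, t+1 ≤ a → (M*N)^a = 0 := by
    intro a ha
    obtain ⟨b, rfl⟩ := Nat.exists_eq_add_of_le ha
    rw [pow_add, h0, zero_mul]
  obtain ⟨p, q, hpq⟩ : ∃ p q, ((M*N)^t) p q ≠ 0 := by
    by_contra h
    push_neg at h
    exact h1 (by ext p q; simpa using h p q)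
  refine sq13_rank
    (fun j : Fin (2*t+1) =>
      if (j:ℕ) < t then (M*N)^(t - (j:ℕ))
      else if (j:ℕ) < 2*t then M * (N*M)^(2*t - 1 - (j:ℕ))
      else 1)
    (fun i : Fin (2*t+1) =>
      if (i:ℕ) < t then (M*N)^(i:ℕ)
      else if (i:ℕ) < 2*t then (N*M)^((i:ℕ) - t) * N
      else (M*N)^t)
    p q (((M*N)^t) p q) hpq ?_ ?_
  · -- diagonal
    intro j
    rcases lt_or_ge (j:ℕ) t with h | h
    · have hexp : t - (j:ℕ) + (j:ℕ) = t := by omega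
      rw [if_pos h, if_pos h, ← pow_add, hexp]
    · have hnot : ¬ ((j:ℕ) < t) := by omega
      rcases lt_or_ge (j:ℕ) (2*t) with h2 | h2
      · rw [if_neg hnot, if_neg hnot, if_pos h2, if_pos h2]
        rw [mul_assoc M, ← mul_assoc ((N*M)^(2*t - 1 - (j:ℕ))), ← pow_add,
          ← mul_assoc M, sq13_MS, mul_assoc, ← pow_succ]
        have hexp : 2*t - 1 - (j:ℕ) + ((j:ℕ) - t) + 1 = t := by omega
        rw [hexp]
      · have hnot2 : ¬ ((j:ℕ) < 2*t) := by omega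
        rw [if_neg hnot, if_neg hnot, if_neg hnot2, if_neg hnot2, one_mul]
  · -- strictly above diagonal
    intro j i hji
    have hji' : (j:ℕ) < (i:ℕ) := hji
    have hi2 : (i:ℕ) < 2*t+1 := i.isLt
    rcases lt_or_ge (j:ℕ) t with h | h
    · obtain ⟨e, he⟩ : ∃ e, t - (j:ℕ) = e + 1 := ⟨t - (j:ℕ) - 1, by omega⟩
      rw [if_pos h]
      rcases lt_or_ge (i:ℕ) t with hi | hi
      · rw [if_pos hi, ← pow_add, hTbig _ (by omega)]
        simp
      · have hinot : ¬ ((i:ℕ) < t) := by omega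
        rcases lt_or_ge (i:ℕ) (2*t) with hi' | hi'
        · rw [if_neg hinot, if_pos hi']
          rcases Nat.eq_zero_or_pos ((i:ℕ) - t) with hk | hk
          · rw [hk, pow_zero, one_mul, he, sq13_TN M N hN e]
            simp
          · obtain ⟨k, hk'⟩ : ∃ k, (i:ℕ) - t = k + 1 := ⟨(i:ℕ) - t - 1, by omega⟩
            rw [hk', ← mul_assoc, he, sq13_sandwich (M*N) (N*M) (sq13_TS M N hN) e k,
              zero_mul]
            simp
        · have hinot2 : ¬ ((i:ℕ) < 2*t) := by omega
          rw [if_neg hinot, if_neg hinot2, ← pow_add, hTbig _ (by omega)]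
          simp
    · have hj2 : (j:ℕ) < 2*t := by omega
      have ht1 : 1 ≤ t := by omega
      have hnot : ¬ ((j:ℕ) < t) := by omega
      have hinot : ¬ ((i:ℕ) < t) := by omega
      rw [if_neg hnot, if_pos hj2]
      rcases lt_or_ge (i:ℕ) (2*t) with hi' | hi'
      · rw [if_neg hinot, if_pos hi']
        rw [mul_assoc M, ← mul_assoc ((N*M)^(2*t - 1 - (j:ℕ))), ← pow_add,
          ← mul_assoc M, sq13_MS, mul_assoc, ← pow_succ, hTbig _ (by omega)]
        simp
      · have hinot2 : ¬ ((i:ℕ) < 2*t) := by omega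
        rw [if_neg hinot, if_neg hinot2]
        rcases Nat.eq_zero_or_pos (2*t - 1 - (j:ℕ)) with hs | hs
        · obtain ⟨t', ht'⟩ : ∃ t', t = t' + 1 := ⟨t-1, by omega⟩
          rw [hs, pow_zero, mul_one, ht', sq13_MT M N hM t']
          simp
        · obtain ⟨s, hs'⟩ : ∃ s, 2*t - 1 - (j:ℕ) = s + 1 := ⟨2*t - 1 - (j:ℕ) - 1, by omega⟩
          obtain ⟨t', ht'⟩ : ∃ t', t = t' + 1 := ⟨t-1, by omega⟩
          rw [hs', ht', mul_assoc, sq13_sandwich (N*M) (M*N) (sq13_TS N M hM) s t',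
            mul_zero]
          simp

/-- Any nilpotent `MN` with `M² = N² = 0` satisfies `(MN)^⌈n/2⌉ = 0`. -/
lemma sq13_half {n : ℕ} (hn : 0 < n) (M N : Matrix (Fin n) (Fin n) ℂ)
    (hM : M * M = 0) (hN : N * N = 0) (hnil : ∃ k, (M*N)^k = 0) :
    (M*N)^((n+1)/2) = 0 := by
  classical
  have hspec : (M*N)^(Nat.find hnil) = 0 := Nat.find_spec hnil
  have ht1 : 0 < Nat.find hnil := by
    rcases Nat.eq_zero_or_pos (Nat.find hnil) with h | h
    · exfalso
      rw [h, pow_zero] at hspec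
      have h2 := congrFun (congrFun hspec ⟨0, hn⟩) ⟨0, hn⟩
      rw [Matrix.one_apply_eq] at h2
      exact one_ne_zero h2
    · exact h
  obtain ⟨t, ht⟩ : ∃ t, Nat.find hnil = t + 1 := ⟨Nat.find hnil - 1, by omega⟩
  have h0 : (M*N)^(t+1) = 0 := by rw [← ht]; exact hspec
  have h1 : (M*N)^t ≠ 0 := Nat.find_min hnil (by omega)
  have hkey := sq13_key t M N hM hN h0 h1
  have hle : t + 1 ≤ (n+1)/2 := by omega
  obtain ⟨r, hr⟩ := Nat.exists_eq_add_of_le hle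
  rw [hr, pow_add, h0, zero_mul]

lemma sq13_Jpow {n : ℕ} (M N : Matrix (Fin n) (Fin n) ℂ) (hM : M*M = 0) (hN : N*N = 0) :
    ∀ k, (M*N - N*M)^(k+1) = (M*N)^(k+1) + ((-1 : ℂ)^(k+1)) • (N*M)^(k+1) := by
  intro k
  induction k with
  | zero => simp [sub_eq_add_neg]
  | succ k ih =>
      have e1 : (M*N) * (N*M)^(k+1) = 0 := by
        have := sq13_sandwich (M*N) (N*M) (sq13_TS M N hN) 0 k
        rwa [pow_one] at this
      have e2 : (N*M) * (M*N)^(k+1) = 0 := by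
        have := sq13_sandwich (N*M) (M*N) (sq13_TS N M hM) 0 k
        rwa [pow_one] at this
      rw [pow_succ' (M*N - N*M) (k+1), ih, sub_mul, mul_add, mul_add,
        mul_smul_comm, mul_smul_comm, e1, e2, smul_zero, add_zero, zero_add,
        ← pow_succ', ← pow_succ', pow_succ (-1 : ℂ) (k+1), mul_neg_one, neg_smul,
        sub_eq_add_neg]

lemma sq13_jbpow (n : ℕ) :
    ∀ k, (jordanBlock n)^k = Matrix.of (fun i j : Fin n => if (i:ℕ) + k = (j:ℕ) then 1 else 0) := by
  intro k
  induction k with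
  | zero =>
      ext i j
      simp [Matrix.one_apply, Fin.ext_iff]
  | succ k ih =>
      ext i j
      rw [pow_succ, ih, Matrix.mul_apply]
      simp only [Matrix.of_apply, jordanBlock]
      by_cases h : (i:ℕ) + k < n
      · rw [Finset.sum_eq_single (⟨(i:ℕ)+k, h⟩ : Fin n)]
        · rw [if_pos rfl, one_mul]
          exact if_congr (by rw [show ((⟨(i:ℕ)+k, h⟩ : Fin n) : ℕ) = (i:ℕ)+k from rfl]; omega) rfl rfl
        · intro b _ hb
          have hbc : ¬ ((i:ℕ) + k = (b:ℕ)) := fun hc => hb (Fin.val_injective hc.symm)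
          rw [if_neg hbc, zero_mul]
        · intro h'
          exact absurd (Finset.mem_univ _) h'
      · have hcond : ¬ ((i:ℕ) + (k+1) = (j:ℕ)) := by have := j.isLt; omega
        rw [if_neg hcond]
        apply Finset.sum_eq_zero
        intro b _
        rw [if_neg (by have := b.isLt; omega), zero_mul]

/-- If a nilpotent `J ∈ M_n(ℂ)` is a commutator of two square-zero matrices, then
`J ^ ⌊(n+1)/2⌋ = 0`; in particular, for `n ≥ 4` the Jordan block `J_n` is not such
a commutator. -/
theorem stmt_13 (n : ℕ) :
    (∀ J M N : Matrix (Fin n) (Fin n) ℂ, IsNilpotent J →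
        M * M = 0 → N * N = 0 → J = M * N - N * M → J ^ ((n + 1) / 2) = 0) ∧
    (4 ≤ n → ¬ ∃ M N : Matrix (Fin n) (Fin n) ℂ,
        M * M = 0 ∧ N * N = 0 ∧ jordanBlock n = M * N - N * M) := by
  have part1 : ∀ J M N : Matrix (Fin n) (Fin n) ℂ, IsNilpotent J →
      M * M = 0 → N * N = 0 → J = M * N - N * M → J ^ ((n + 1) / 2) = 0 := by
    intro J M N hJ hM hN hJc
    rcases Nat.eq_zero_or_pos n with hn | hn
    · subst hn
      ext i j
      exact i.elim0
    obtain ⟨K, hK⟩ := hJ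
    have hJ2 : J^(2*K+1+1) = 0 := by
      obtain ⟨b, hb⟩ := Nat.exists_eq_add_of_le (show K ≤ 2*K+1+1 by omega)
      rw [hb, pow_add, hK, zero_mul]
    rw [hJc, sq13_Jpow M N hM hN (2*K+1)] at hJ2
    have hsign : ((-1:ℂ)^(2*K+1+1)) = 1 := Even.neg_one_pow ⟨K+1, by ring⟩
    rw [hsign, one_smul] at hJ2
    have hTa : (M*N)^(2*K+1+1) = -((N*M)^(2*K+1+1)) := eq_neg_of_add_eq_zero_left hJ2
    have hSa : (N*M)^(2*K+1+1) = -((M*N)^(2*K+1+1)) := eq_neg_of_add_eq_zero_right hJ2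
    have hTnil : ∃ k, (M*N)^k = 0 := by
      refine ⟨(2*K+1+1) + (2*K+1+1), ?_⟩
      rw [pow_add]
      nth_rewrite 2 [hTa]
      rw [mul_neg, sq13_sandwich (M*N) (N*M) (sq13_TS M N hN) (2*K+1) (2*K+1), neg_zero]
    have hSnil : ∃ k, (N*M)^k = 0 := by
      refine ⟨(2*K+1+1) + (2*K+1+1), ?_⟩
      rw [pow_add]
      nth_rewrite 2 [hSa]
      rw [mul_neg, sq13_sandwich (N*M) (M*N) (sq13_TS N M hM) (2*K+1) (2*K+1), neg_zero]
    have hTm := sq13_half hn M N hM hN hTnil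
    have hSm := sq13_half hn N M hN hM hSnil
    obtain ⟨m, hm⟩ : ∃ m, (n+1)/2 = m + 1 := ⟨(n+1)/2 - 1, by omega⟩
    rw [hJc, hm, sq13_Jpow M N hM hN m, ← hm, hTm, hSm, smul_zero, add_zero]
  refine ⟨part1, ?_⟩
  rintro hn4 ⟨M, N, hM, hN, hc⟩
  have hnil : IsNilpotent (jordanBlock n) := by
    refine ⟨n, ?_⟩
    rw [sq13_jbpow n n]
    ext i j
    have := j.isLt
    simp only [Matrix.of_apply, Matrix.zero_apply, ite_eq_right_iff]
    intro hcon
    omega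
  have hz := part1 (jordanBlock n) M N hnil hM hN hc
  rw [sq13_jbpow n ((n+1)/2)] at hz
  have h0n : 0 < n := by omega
  have hmn : (n+1)/2 < n := by omega
  have hent := congrFun (congrFun hz ⟨0, h0n⟩) ⟨(n+1)/2, hmn⟩
  simp only [Matrix.of_apply, Matrix.zero_apply] at hent
  rw [if_pos (by simp)] at hent
  exact one_ne_zero hent
end

section
/- For every κ ≥ 1, the matrices J_κ ⊕ J_κ and J_{κ+1} ⊕ J_κ are commutators of two square-zero matrices. -/
/-- A matrix is a commutator of two square-zero matrices. -/
def IsCommSqZero {m : Type*} [Fintype m] [DecidableEq m] (T : Matrix m m ℂ) : Prop :=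
  ∃ M N : Matrix m m ℂ, M * M = 0 ∧ N * N = 0 ∧ T = M * N - N * M

private lemma aux_block {m n : Type*} [Fintype m] [Fintype n] [DecidableEq m] [DecidableEq n]
    (X : Matrix m m ℂ) (Y : Matrix n n ℂ) (P : Matrix m n ℂ) (Q : Matrix n m ℂ)
    (h1 : P * Q = X) (h2 : Q * P = -Y) :
    IsCommSqZero (Matrix.fromBlocks X 0 0 Y) := by
  refine ⟨Matrix.fromBlocks 0 P 0 0, Matrix.fromBlocks 0 0 Q 0, ?_, ?_, ?_⟩
  · simp [Matrix.fromBlocks_multiply]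
  · simp [Matrix.fromBlocks_multiply]
  · rw [Matrix.fromBlocks_multiply, Matrix.fromBlocks_multiply, h1, h2]
    ext (i | i) (j | j) <;> simp [Matrix.fromBlocks]

private noncomputable def D (n : ℕ) : Matrix (Fin n) (Fin n) ℂ :=
  Matrix.diagonal fun i => (-1 : ℂ) ^ (i : ℕ)

private lemma D_sq (n : ℕ) : D n * D n = 1 := by
  simp only [D, Matrix.diagonal_mul_diagonal, ← pow_add, ← two_mul, pow_mul, neg_one_sq,
    one_pow]
  exact Matrix.diagonal_one

private lemma DJD (n : ℕ) : D n * jordanBlock n * D n = -(jordanBlock n) := by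
  ext i j
  simp only [D, Matrix.diagonal_mul, Matrix.mul_diagonal, jordanBlock, Matrix.of_apply,
    Matrix.neg_apply]
  by_cases h : (i : ℕ) + 1 = (j : ℕ)
  · rw [if_pos h, ← h, pow_succ]
    ring_nf
    rw [pow_mul]
    norm_num
    exact neg_one_pow_eq_or ℂ _
  · simp [h]

private noncomputable def A (κ : ℕ) : Matrix (Fin (κ + 1)) (Fin κ) ℂ :=
  Matrix.of fun i j => if (i : ℕ) = (j : ℕ) then 1 else 0

private noncomputable def Y (κ : ℕ) : Matrix (Fin κ) (Fin (κ + 1)) ℂ :=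
  Matrix.of fun i j => if (i : ℕ) + 1 = (j : ℕ) then 1 else 0

private lemma AY (κ : ℕ) : A κ * Y κ = jordanBlock (κ + 1) := by
  ext i j
  simp only [Matrix.mul_apply, A, Y, jordanBlock, Matrix.of_apply]
  rcases lt_or_ge (i : ℕ) κ with h | h
  · rw [Finset.sum_eq_single (⟨(i : ℕ), h⟩ : Fin κ)]
    · simp
    · intro k _ hk
      have : (i : ℕ) ≠ (k : ℕ) := fun he => hk (by apply Fin.ext; simp [← he])
      simp [this]
    · simp
  · have hi : (i : ℕ) = κ := le_antisymm (Nat.lt_succ_iff.mp i.2) h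
    have hj : (i : ℕ) + 1 ≠ (j : ℕ) := by
      have := j.2; omega
    rw [if_neg hj]
    apply Finset.sum_eq_zero
    intro k _
    have : (i : ℕ) ≠ (k : ℕ) := by have := k.2; omega
    simp [this]

private lemma YA (κ : ℕ) : Y κ * A κ = jordanBlock κ := by
  ext i j
  simp only [Matrix.mul_apply, A, Y, jordanBlock, Matrix.of_apply]
  rw [Finset.sum_eq_single (⟨(j : ℕ), j.2.trans (Nat.lt_succ_self κ)⟩ : Fin (κ + 1))]
  · simp
  · intro k _ hk
    have : (k : ℕ) ≠ (j : ℕ) := fun he => hk (by apply Fin.ext; simp [he])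
    simp [this]
  · simp

/-- For every `κ ≥ 1`, both `J_κ ⊕ J_κ` and `J_{κ+1} ⊕ J_κ` are commutators of two
square-zero matrices. -/
theorem stmt_14 (κ : ℕ) (hκ : 1 ≤ κ) :
    IsCommSqZero (Matrix.fromBlocks (jordanBlock κ) 0 0 (jordanBlock κ)) ∧
    IsCommSqZero (Matrix.fromBlocks (jordanBlock (κ + 1)) 0 0 (jordanBlock κ)) := by
  constructor
  · refine aux_block _ _ (jordanBlock κ * D κ) (D κ) ?_ ?_
    · rw [Matrix.mul_assoc, D_sq, Matrix.mul_one]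
    · rw [← Matrix.mul_assoc, DJD]
  · refine aux_block _ _ (A κ * D κ) (D κ * Y κ) ?_ ?_
    · rw [Matrix.mul_assoc, ← Matrix.mul_assoc (D κ), D_sq, Matrix.one_mul, AY]
    · rw [Matrix.mul_assoc, ← Matrix.mul_assoc (Y κ), YA, ← Matrix.mul_assoc, DJD]
end

section
/- There is no unitary 3×3 complex matrix that is a commutator of two unitary 3×3 matrices: if U, V ∈ U(3), then UV - VU is not unitary. In contrast, every traceless unitary 2×2 matrix is a commutator of two unitary 2×2 matrices. -/
open Matrix Complex

set_option linter.unreachableTactic false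
set_option linter.unusedTactic false


private lemma unit_sq19 {x : ℂ} (h : (starRingEnd ℂ x * x) ^ 2 = 1) : starRingEnd ℂ x * x = 1 := by
  have hx : starRingEnd ℂ x * x = (Complex.normSq x : ℂ) := by
    rw [mul_comm, Complex.mul_conj]
  rw [hx] at h ⊢
  norm_cast at h ⊢
  nlinarith [Complex.normSq_nonneg x, sq_nonneg (Complex.normSq x - 1), sq_nonneg (Complex.normSq x + 1)]

private lemma key19 (W U : Matrix (Fin 2) (Fin 2) ℂ) (l : ℂ)
    (hW1 : star W * W = 1)
    (hU1 : star U * U = 1) (hU2 : U * star U = 1) (hUU : U * U = -1)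
    (hanti : U * W = -(W * U))
    (hl : W * W = (l * l) • (1 : Matrix (Fin 2) (Fin 2) ℂ))
    (hl1 : starRingEnd ℂ l * l = 1) :
    ∃ V, V ∈ unitary (Matrix (Fin 2) (Fin 2) ℂ) ∧ W = U * V - V * U := by
  have hWU : W * U = -(U * W) := by rw [hanti, neg_neg]
  set s : ℂ := (Real.sqrt 3 : ℂ) with hs
  have hs2 : s * s = 3 := by
    rw [hs, ← Complex.ofReal_mul, Real.mul_self_sqrt (by norm_num : (0:ℝ) ≤ 3)]
    norm_num
  have hsconj : starRingEnd ℂ s = s := by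
    rw [hs]; exact Complex.conj_ofReal _
  set c : ℂ := Complex.I * s * l / 2 with hc
  have hcconj : starRingEnd ℂ c = -(Complex.I * s * starRingEnd ℂ l / 2) := by
    rw [hc, map_div₀, RingHom.map_mul, RingHom.map_mul, hsconj, Complex.conj_I,
      map_ofNat]
    ring
  set A : Matrix (Fin 2) (Fin 2) ℂ := star U * W with hA
  set V : Matrix (Fin 2) (Fin 2) ℂ := (2⁻¹ : ℂ) • A + c • 1 with hV
  have hUA : U * A = W := by rw [hA, ← mul_assoc, hU2, one_mul]
  have hAU : A * U = -W := by
    rw [hA, mul_assoc, hWU, mul_neg, ← mul_assoc, hU1, one_mul]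
  have hcomm : U * V - V * U = W := by
    rw [hV]
    simp only [mul_add, add_mul, mul_smul_comm, smul_mul_assoc, hUA, hAU, mul_one, one_mul]
    module
  have hstarV : star V = (2⁻¹ : ℂ) • (star W * U) + (starRingEnd ℂ c) • 1 := by
    rw [hV, star_add, star_smul, star_smul, star_one, hA, Matrix.star_mul, star_star]
    have : star (2⁻¹ : ℂ) = (2⁻¹ : ℂ) := by norm_num
    rw [this]
    rfl
  have hBA : (star W * U) * A = 1 := by
    rw [hA, mul_assoc, ← mul_assoc U (star U) W, hU2, one_mul, hW1]
  have hWsU : W * star U = -(star U * W) := by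
    have e1 : star U * (W * U) * star U = star U * (-(U * W)) * star U := by rw [hWU]
    have e2 : star U * (W * U) * star U = (star U * W) * (U * star U) := by noncomm_ring
    have e3 : star U * (-(U * W)) * star U = -(((star U * U) * W) * star U) := by noncomm_ring
    rw [e2, e3, hU2, hU1, mul_one, one_mul] at e1
    linear_combination (norm := noncomm_ring) e1
  have hsUsU : star U * star U = -1 := by
    have h := congrArg star hUU
    simpa using h
  have hAA : A * A = (l * l) • 1 := by
    have e : A * A = star U * ((W * star U) * W) := by rw [hA]; noncomm_ring
    rw [e, hWsU]
    have e2 : star U * (-(star U * W) * W) = -((star U * star U) * (W * W)) := by noncomm_ring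
    rw [e2, hsUsU, hl, neg_one_mul, neg_neg]
  have hB : star W * U = ((starRingEnd ℂ l * starRingEnd ℂ l)) • A := by
    have e : (star W * U) * (A * A) = (l * l) • (star W * U) := by
      rw [hAA, mul_smul_comm, mul_one]
    have e2 : (star W * U) * (A * A) = A := by
      rw [← mul_assoc, hBA, one_mul]
    rw [e2] at e
    have e3 := congrArg (fun M => ((starRingEnd ℂ l * starRingEnd ℂ l)) • M) e
    simp only [smul_smul] at e3
    rw [show (starRingEnd ℂ l * starRingEnd ℂ l) * (l * l)
        = (starRingEnd ℂ l * l) * (starRingEnd ℂ l * l) by ring, hl1, one_mul, one_smul] at e3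
    exact e3.symm
  have k1 : starRingEnd ℂ c * c = 3/4 := by
    rw [hcconj, hc]
    linear_combination (-(s*s)*(starRingEnd ℂ l * l)/4) * Complex.I_sq
      + ((starRingEnd ℂ l * l)/4) * hs2 + (3/4) * hl1
  have k2 : (2⁻¹ : ℂ) * (c * (starRingEnd ℂ l * starRingEnd ℂ l)) + starRingEnd ℂ c * 2⁻¹ = 0 := by
    rw [hcconj, hc]
    linear_combination (Complex.I * s * starRingEnd ℂ l / 4) * hl1
  have hVunit : star V * V = 1 := by
    have goal' : star V * V =
        ((2⁻¹ * 2⁻¹ + starRingEnd ℂ c * c) : ℂ) • (1 : Matrix (Fin 2) (Fin 2) ℂ) +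
        ((2⁻¹ * (c * (starRingEnd ℂ l * starRingEnd ℂ l)) + starRingEnd ℂ c * 2⁻¹) : ℂ) • A := by
      rw [hstarV, hV]
      simp only [add_mul, mul_add, smul_mul_assoc, mul_smul_comm, smul_smul, hBA, mul_one, one_mul]
      rw [hB]
      simp only [smul_smul]
      module
    rw [goal', k2, zero_smul, add_zero,
      show (2⁻¹ * 2⁻¹ + starRingEnd ℂ c * c : ℂ) = 1 from by rw [k1]; norm_num, one_smul]
  exact ⟨V, Unitary.mem_iff.mpr ⟨hVunit, (mul_eq_one_comm).mp hVunit⟩, hcomm.symm⟩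


/-- No unitary `3 × 3` matrix is a commutator of two `3 × 3` unitaries; in contrast,
every traceless unitary `2 × 2` matrix is a commutator of two `2 × 2` unitaries. -/
theorem stmt_19 :
    (∀ U V : Matrix (Fin 3) (Fin 3) ℂ,
        U ∈ unitary (Matrix (Fin 3) (Fin 3) ℂ) →
        V ∈ unitary (Matrix (Fin 3) (Fin 3) ℂ) →
        U * V - V * U ∉ unitary (Matrix (Fin 3) (Fin 3) ℂ)) ∧
    (∀ W : Matrix (Fin 2) (Fin 2) ℂ,
        W ∈ unitary (Matrix (Fin 2) (Fin 2) ℂ) → W.trace = 0 →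
        ∃ U V : Matrix (Fin 2) (Fin 2) ℂ,
          U ∈ unitary (Matrix (Fin 2) (Fin 2) ℂ) ∧
          V ∈ unitary (Matrix (Fin 2) (Fin 2) ℂ) ∧
          W = U * V - V * U) := by
  constructor
  · intro U V hU hV hW
    obtain ⟨hU1, hU2⟩ := Unitary.mem_iff.mp hU
    obtain ⟨hV1, hV2⟩ := Unitary.mem_iff.mp hV
    set C := U * V * (star U * star V) with hCdef
    have hCVU : C * (V * U) = U * V := by
      have : C * (V * U) = U * V * (star U * ((star V * V) * U)) := by
        rw [hCdef]; noncomm_ring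
      rw [this, hV1, one_mul, hU1, mul_one]
    have hCsub : U * V - V * U = (C - 1) * (V * U) := by
      rw [sub_mul, hCVU, one_mul]
    have hVU : (V * U) ∈ unitary (Matrix (Fin 3) (Fin 3) ℂ) := mul_mem hV hU
    have hC1mem : C - 1 ∈ unitary (Matrix (Fin 3) (Fin 3) ℂ) := by
      have h : C - 1 = (U * V - V * U) * star (V * U) := by
        rw [hCsub, mul_assoc, (Unitary.mem_iff.mp hVU).2, mul_one]
      rw [h]
      exact mul_mem hW (Unitary.star_mem hVU)
    have hCmem : C ∈ unitary (Matrix (Fin 3) (Fin 3) ℂ) :=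
      mul_mem (mul_mem hU hV) (mul_mem (Unitary.star_mem hU) (Unitary.star_mem hV))
    have s1 : star C * C = 1 := (Unitary.mem_iff.mp hCmem).1
    have s2 : star (C - 1) * (C - 1) = 1 := (Unitary.mem_iff.mp hC1mem).1
    have h3 : star C = 1 - C := by
      rw [star_sub, star_one, sub_mul, mul_sub, mul_sub, s1, one_mul, mul_one] at s2
      linear_combination (norm := noncomm_ring) -s2
    have hC2 : C * C = C - 1 := by
      rw [h3, sub_mul, one_mul] at s1
      linear_combination (norm := noncomm_ring) -s1
    have hC3 : C * (C * C) = -1 := by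
      rw [hC2, mul_sub, mul_one, hC2]
      abel
    have dU : star (det U) * det U = 1 := by
      rw [← Matrix.det_conjTranspose, ← Matrix.det_mul, ← Matrix.star_eq_conjTranspose, hU1,
        Matrix.det_one]
    have dV : star (det V) * det V = 1 := by
      rw [← Matrix.det_conjTranspose, ← Matrix.det_mul, ← Matrix.star_eq_conjTranspose, hV1,
        Matrix.det_one]
    have hdetC : C.det = 1 := by
      have : C.det = (star (det U) * det U) * (star (det V) * det V) := by
        rw [hCdef]
        simp [Matrix.det_mul, Matrix.star_eq_conjTranspose, Matrix.det_conjTranspose]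
        ring
      rw [this, dU, dV, one_mul]
    have e2 : ((-1 : Matrix (Fin 3) (Fin 3) ℂ)).det = 1 := by
      rw [← hC3, Matrix.det_mul, hdetC, Matrix.det_mul, hdetC]; ring
    simp [Matrix.det_neg] at e2
    norm_num at e2

  · intro W hW htr
    obtain ⟨hW1, hW2⟩ := Unitary.mem_iff.mp hW
    obtain ⟨a, b, c, d, hWeta⟩ : ∃ a b c d, W = !![a, b; c, d] :=
      ⟨_, _, _, _, Matrix.eta_fin_two W⟩
    have hd : d = -a := by
      rw [hWeta, Matrix.trace_fin_two_of] at htr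
      linear_combination htr
    subst hd
    rw [hWeta] at hW1 ⊢
    clear hW2 hW hWeta htr
    -- entry relations
    have e00 : starRingEnd ℂ a * a + starRingEnd ℂ c * c = 1 := by
      have h := congrFun (congrFun hW1 0) 0
      simpa [Matrix.mul_apply, Fin.sum_univ_two, Matrix.star_eq_conjTranspose,
        Matrix.conjTranspose_apply, Matrix.one_apply] using h
    have e11 : starRingEnd ℂ b * b + starRingEnd ℂ a * a = 1 := by
      have h := congrFun (congrFun hW1 1) 1
      simpa [Matrix.mul_apply, Fin.sum_univ_two, Matrix.star_eq_conjTranspose,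
        Matrix.conjTranspose_apply, Matrix.one_apply, mul_neg, neg_mul, neg_neg] using h
    have hbc : starRingEnd ℂ b * b = starRingEnd ℂ c * c := by
      linear_combination e11 - e00
    -- determinant is unimodular
    have hdet : starRingEnd ℂ (a * a + b * c) * (a * a + b * c) = 1 := by
      have h : star ((!![a, b; c, -a] : Matrix (Fin 2) (Fin 2) ℂ).det)
          * (!![a, b; c, -a] : Matrix (Fin 2) (Fin 2) ℂ).det = 1 := by
        rw [← Matrix.det_conjTranspose, ← Matrix.star_eq_conjTranspose, ← Matrix.det_mul, hW1,
          Matrix.det_one]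
      rw [Matrix.det_fin_two_of] at h
      have h2 : starRingEnd ℂ (a * (-a) - b * c) * (a * (-a) - b * c) = 1 := h
      rw [map_sub, RingHom.map_mul, RingHom.map_mul, map_neg] at h2
      rw [map_add, RingHom.map_mul, RingHom.map_mul]
      linear_combination h2
    -- construct q
    obtain ⟨q, hq, hqcb⟩ : ∃ q : ℂ, starRingEnd ℂ q * q = 1 ∧ q * c = starRingEnd ℂ q * b := by
      rcases eq_or_ne c 0 with hc0 | hc0
      · have hb0 : b = 0 := by
          have h := hbc
          rw [hc0, map_zero, zero_mul, mul_comm, Complex.mul_conj] at h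
          exact_mod_cast Complex.normSq_eq_zero.mp (by exact_mod_cast h)
        exact ⟨1, by simp, by simp [hb0, hc0]⟩
      · obtain ⟨q, hq2⟩ := IsAlgClosed.exists_pow_nat_eq (b * c⁻¹) (n := 2) (by norm_num)
        have hcc0 : starRingEnd ℂ c ≠ 0 := by simpa using hc0
        have hq1 : starRingEnd ℂ q * q = 1 := by
          apply unit_sq19
          have h1 : (starRingEnd ℂ q * q) ^ 2 = starRingEnd ℂ (q ^ 2) * q ^ 2 := by
            rw [map_pow]; ring
          rw [h1, hq2, RingHom.map_mul, map_inv₀]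
          field_simp
          linear_combination hbc
        have hq0 : q ≠ 0 := by
          rintro rfl
          simp at hq1
        refine ⟨q, hq1, ?_⟩
        have h2 : q ^ 2 * c = b := by
          rw [hq2]; field_simp
        have h3 : q * (q * c) = q * (starRingEnd ℂ q * b) := by
          calc q * (q * c) = q ^ 2 * c := by ring
            _ = b := h2
            _ = (starRingEnd ℂ q * q) * b := by rw [hq1]; ring
            _ = q * (starRingEnd ℂ q * b) := by ring
        exact mul_left_cancel₀ hq0 h3
    -- build U
    set U : Matrix (Fin 2) (Fin 2) ℂ := !![0, q; -starRingEnd ℂ q, 0] with hU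
    have hU1 : star U * U = 1 := by
      ext i j
      fin_cases i <;> fin_cases j <;>
        simp [hU, Matrix.mul_apply, Fin.sum_univ_two, Matrix.star_eq_conjTranspose,
          Matrix.conjTranspose_apply, Matrix.one_apply] <;>
        linear_combination hq
    have hU2 : U * star U = 1 := by
      ext i j
      fin_cases i <;> fin_cases j <;>
        simp [hU, Matrix.mul_apply, Fin.sum_univ_two, Matrix.star_eq_conjTranspose,
          Matrix.conjTranspose_apply, Matrix.one_apply] <;>
        linear_combination hq
    have hUU : U * U = -1 := by
      ext i j
      fin_cases i <;> fin_cases j <;>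
        simp [hU, Matrix.mul_apply, Fin.sum_univ_two, Matrix.one_apply] <;>
        linear_combination hq
    have hanti : U * !![a, b; c, -a] = -(!![a, b; c, -a] * U) := by
      ext i j
      fin_cases i <;> fin_cases j <;>
        simp [hU, Matrix.mul_apply, Fin.sum_univ_two] <;>
        first
        | ring1
        | linear_combination hqcb
        | linear_combination -hqcb
        | linear_combination (2:ℂ) * hqcb
        | linear_combination (-2:ℂ) * hqcb
    -- lambda
    obtain ⟨l, hl2⟩ := IsAlgClosed.exists_pow_nat_eq (a * a + b * c) (n := 2) (by norm_num)
    have hCH : !![a, b; c, -a] * !![a, b; c, -a] = (l * l) • (1 : Matrix (Fin 2) (Fin 2) ℂ) := by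
      ext i j
      fin_cases i <;> fin_cases j <;>
        simp [Matrix.mul_apply, Fin.sum_univ_two, Matrix.one_apply] <;>
        first
        | ring1
        | linear_combination hl2
        | linear_combination -hl2
        | linear_combination (2:ℂ) * hl2
        | linear_combination (-2:ℂ) * hl2
    have hl1 : starRingEnd ℂ l * l = 1 := by
      apply unit_sq19
      have h1 : (starRingEnd ℂ l * l) ^ 2 = starRingEnd ℂ (l ^ 2) * l ^ 2 := by
        rw [map_pow]; ring
      rw [h1, hl2]
      exact hdet
    obtain ⟨V, hVmem, hWc⟩ := key19 _ U l hW1 hU1 hU2 hUU hanti hCH hl1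
    exact ⟨U, V, Unitary.mem_iff.mpr ⟨hU1, hU2⟩, hVmem, hWc⟩
end
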